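/- arXiv:2106.12323 — 8 statements merged into one kernel-verified Lean document; each statement's English description precedes it below -/
import Mathlib

section
/- For all positive integers n and m, the convolution S_n * A_m is contained in A_m * S_n; that is, every set E of the form E = E_1 ∪ … ∪ E_k, where E_1 < … < E_k are finite subsets of ℕ with #E_i ≤ m for each i and {min E_1, …, min E_k} ∈ S_n, can be written as a union of at most m sets each belonging to S_n. -/
/-- `E < F` for finite sets of naturals: every element of `E` is less than
every element of `F` (vacuously true if one of them is empty). -/
def FinsetLT (E F : Finset ℕ) : Prop := ∀ a ∈ E, ∀ b ∈ F, a < b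

/-- The convolution `M * N` of two families of finite subsets of `ℕ`: it consists of `∅`
together with all unions `E₁ ∪ … ∪ E_k` where `E₁ < … < E_k` are nonempty sets in `N`
and `{min E₁, …, min E_k} ∈ M`. -/
def SchreierConv (M N : Set (Finset ℕ)) : Set (Finset ℕ) :=
  {E | E = ∅ ∨ ∃ (k : ℕ) (Es : Fin k → Finset ℕ),
    (∀ i, Es i ∈ N) ∧ (∀ i, (Es i).Nonempty) ∧
    (∀ i j : Fin k, i < j → FinsetLT (Es i) (Es j)) ∧
    (Finset.image (fun i => sInf (↑(Es i) : Set ℕ)) Finset.univ) ∈ M ∧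
    E = Finset.univ.biUnion Es}

/-- The first Schreier family `S₁ = {E : #E ≤ min E} ∪ {∅}`. -/
def SchreierOne : Set (Finset ℕ) := {E | ∀ k ∈ E, E.card ≤ k}

/-- The Schreier families: `S₀` = singletons and `∅`, `S₁` as above,
`S_{n+1} = S₁ * S_n`. -/
def Schreier : ℕ → Set (Finset ℕ)
  | 0 => {E | E.card ≤ 1}
  | 1 => SchreierOne
  | n + 2 => SchreierConv SchreierOne (Schreier (n + 1))

lemma schreier_dom : ∀ (n : ℕ) (F G : Finset ℕ) (θ : ℕ → ℕ), G ∈ Schreier n →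
    StrictMonoOn θ ↑F → (∀ x ∈ F, θ x ≤ x) → (∀ x ∈ F, θ x ∈ G) → F ∈ Schreier n
  | 0, F, G, θ, hG, hmono, hle, hmem => by
    have hcard : F.card ≤ G.card :=
      Finset.card_le_card_of_injOn θ hmem hmono.injOn
    have hG1 : G.card ≤ 1 := hG
    exact le_trans hcard hG1
  | 1, F, G, θ, hG, hmono, hle, hmem => by
    have hcard : F.card ≤ G.card :=
      Finset.card_le_card_of_injOn θ hmem hmono.injOn
    intro x hx
    exact le_trans (le_trans hcard (hG (θ x) (hmem x hx))) (hle x hx)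
  | (n+2), F, G, θ, hG, hmono, hle, hmem => by
    classical
    show F ∈ SchreierConv SchreierOne (Schreier (n+1))
    rcases eq_or_ne F ∅ with rfl | hFne
    · exact Or.inl rfl
    have hG' : G = ∅ ∨ ∃ (l : ℕ) (Gs : Fin l → Finset ℕ),
        (∀ i, Gs i ∈ Schreier (n+1)) ∧ (∀ i, (Gs i).Nonempty) ∧
        (∀ i j, i < j → FinsetLT (Gs i) (Gs j)) ∧
        (Finset.image (fun i => sInf (↑(Gs i) : Set ℕ)) Finset.univ) ∈ SchreierOne ∧
        G = Finset.univ.biUnion Gs := hG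
    obtain ⟨x₀, hx₀⟩ := Finset.nonempty_iff_ne_empty.2 hFne
    rcases hG' with hGe | ⟨l, Gs, hGmem, hGne, hGlt, hGmins, rfl⟩
    · exact absurd (hmem x₀ hx₀) (by simp [hGe])
    set s : Finset (Fin l) :=
      Finset.univ.filter (fun i => (F.filter (fun x => θ x ∈ Gs i)).Nonempty) with hs
    set e := s.orderIsoOfFin rfl with he
    refine Or.inr ⟨s.card, fun t => F.filter (fun x => θ x ∈ Gs (e t)), ?_, ?_, ?_, ?_, ?_⟩
    · -- each in Schreier (n+1)
      intro t
      refine schreier_dom (n+1) _ (Gs (e t)) θ (hGmem _) ?_ ?_ ?_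
      · exact hmono.mono (Finset.coe_subset.2 (Finset.filter_subset _ _))
      · exact fun x hx => hle x (Finset.mem_filter.1 hx).1
      · exact fun x hx => (Finset.mem_filter.1 hx).2
    · -- nonempty
      intro t
      exact (Finset.mem_filter.1 (e t).2).2
    · -- ordering
      intro t t' htt' a ha b hb
      have hta : θ a ∈ Gs (e t) := (Finset.mem_filter.1 ha).2
      have htb : θ b ∈ Gs (e t') := (Finset.mem_filter.1 hb).2
      have hee : (e t : Fin l) < (e t' : Fin l) := by
        exact Subtype.coe_lt_coe.2 (e.strictMono htt')
      have hθab : θ a < θ b := hGlt _ _ hee _ hta _ htb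
      have haF : a ∈ F := (Finset.mem_filter.1 ha).1
      have hbF : b ∈ F := (Finset.mem_filter.1 hb).1
      rcases lt_or_ge a b with h | h
      · exact h
      · exfalso
        rcases h.lt_or_eq with h' | rfl
        · exact absurd (hmono hbF haF h') (not_lt.2 hθab.le)
        · exact lt_irrefl _ hθab
    · -- mins in SchreierOne
      intro a ha
      obtain ⟨t₀, -, ht₀⟩ := Finset.mem_image.1 ha
      have hFt₀ : (F.filter (fun x => θ x ∈ Gs (e t₀))).Nonempty :=
        (Finset.mem_filter.1 (e t₀).2).2
      have hx₀' : sInf (↑(F.filter (fun x => θ x ∈ Gs (e t₀))) : Set ℕ)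
          ∈ F.filter (fun x => θ x ∈ Gs (e t₀)) :=
        Nat.sInf_mem (Finset.coe_nonempty.2 hFt₀)
      set y := sInf (↑(F.filter (fun x => θ x ∈ Gs (e t₀))) : Set ℕ) with hy
      have h1 : sInf (↑(Gs (e t₀)) : Set ℕ) ≤ θ y :=
        Nat.sInf_le (Finset.mem_coe.2 (Finset.mem_filter.1 hx₀').2)
      have h2 : θ y ≤ y := hle y (Finset.mem_filter.1 hx₀').1
      -- card of Gs mins image = l
      have hGminj : Set.InjOn (fun i => sInf (↑(Gs i) : Set ℕ)) ↑(Finset.univ : Finset (Fin l)) := by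
        intro i _ j _ hij
        simp only at hij
        by_contra hne
        have hmem' : ∀ i : Fin l, sInf (↑(Gs i) : Set ℕ) ∈ Gs i :=
          fun i => Finset.mem_coe.1 (Nat.sInf_mem (Finset.coe_nonempty.2 (hGne i)))
        rcases lt_trichotomy i j with h | h | h
        · have := hGlt i j h _ (hmem' i) _ (hmem' j); omega
        · exact hne h
        · have := hGlt j i h _ (hmem' j) _ (hmem' i); omega
      have hcardG : (Finset.image (fun i => sInf (↑(Gs i) : Set ℕ)) Finset.univ).card = l := by
        rw [Finset.card_image_of_injOn hGminj, Finset.card_univ, Fintype.card_fin]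
      have hcardF : (Finset.image
          (fun t => sInf (↑(F.filter (fun x => θ x ∈ Gs (e t))) : Set ℕ))
          (Finset.univ : Finset (Fin s.card))).card ≤ l := by
        calc _ ≤ (Finset.univ : Finset (Fin s.card)).card := Finset.card_image_le
        _ = s.card := by rw [Finset.card_univ, Fintype.card_fin]
        _ ≤ l := by
            have := Finset.card_le_univ s
            rwa [Fintype.card_fin] at this
      have h3 : l ≤ sInf (↑(Gs (e t₀)) : Set ℕ) := by
        have := hGmins (sInf (↑(Gs (e t₀)) : Set ℕ))
          (Finset.mem_image_of_mem _ (Finset.mem_univ (e t₀ : Fin l)))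
        rwa [hcardG] at this
      calc (Finset.image _ Finset.univ).card ≤ l := hcardF
        _ ≤ sInf (↑(Gs (e t₀)) : Set ℕ) := h3
        _ ≤ θ y := h1
        _ ≤ y := h2
        _ = a := ht₀
    · -- union
      ext x
      simp only [Finset.mem_biUnion, Finset.mem_univ, true_and, Finset.mem_filter]
      constructor
      · intro hxF
        have : θ x ∈ Finset.univ.biUnion Gs := hmem x hxF
        obtain ⟨i, -, hi⟩ := Finset.mem_biUnion.1 this
        have his : i ∈ s := by
          rw [hs, Finset.mem_filter]
          exact ⟨Finset.mem_univ i, ⟨x, Finset.mem_filter.2 ⟨hxF, hi⟩⟩⟩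
        refine ⟨e.symm ⟨i, his⟩, hxF, ?_⟩
        have : e (e.symm ⟨i, his⟩) = ⟨i, his⟩ := e.apply_symm_apply _
        rw [this]
        exact hi
      · rintro ⟨t, hxF, -⟩
        exact hxF

/-- `S_n * A_m ⊆ A_m * S_n`: if `E = E₁ ∪ … ∪ E_k` where `E₁ < … < E_k` are
finite subsets of `ℕ` with `#E_i ≤ m` and `{min E_i : i} ∈ S_n`, then `E` is the union of
at most `m` sets, each in `S_n`. -/
theorem stmt_1 (n m : ℕ) (hn : 0 < n) (hm : 0 < m)
    (k : ℕ) (Es : Fin k → Finset ℕ)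
    (hne : ∀ i, (Es i).Nonempty)
    (hcard : ∀ i, (Es i).card ≤ m)
    (hlt : ∀ i j : Fin k, i < j → FinsetLT (Es i) (Es j))
    (hmins : (Finset.image (fun i => sInf (↑(Es i) : Set ℕ)) Finset.univ) ∈ Schreier n) :
    ∃ Fs : Fin m → Finset ℕ,
      Finset.univ.biUnion Es = Finset.univ.biUnion Fs ∧ ∀ j, Fs j ∈ Schreier n := by
  classical
  have hdisj : ∀ (i i' : Fin k) (a : ℕ), a ∈ Es i → a ∈ Es i' → i = i' := by
    intro i i' a h h'
    rcases lt_trichotomy i i' with hlt' | h'' | hlt'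
    · exact absurd (hlt i i' hlt' a h a h') (lt_irrefl a)
    · exact h''
    · exact absurd (hlt i' i hlt' a h' a h) (lt_irrefl a)
  set θ : ℕ → ℕ := fun a =>
    if h : ∃ i, a ∈ Es i then sInf (↑(Es h.choose) : Set ℕ) else 0 with hθdef
  have hθ : ∀ (i : Fin k) (a : ℕ), a ∈ Es i → θ a = sInf (↑(Es i) : Set ℕ) := by
    intro i a ha
    have h : ∃ i, a ∈ Es i := ⟨i, ha⟩
    have heq := hdisj h.choose i a h.choose_spec ha
    simp only [hθdef, dif_pos h, heq]
  set g : Fin k → Fin m → ℕ := fun i j =>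
    if h : (j : ℕ) < (Es i).card then (Es i).orderEmbOfFin rfl ⟨j, h⟩
    else (Es i).min' (hne i) with hg
  have hgmem : ∀ i j, g i j ∈ Es i := by
    intro i j
    rw [hg]
    dsimp only
    split
    · exact Finset.orderEmbOfFin_mem _ _ _
    · exact Finset.min'_mem _ _
  set Fs : Fin m → Finset ℕ := fun j =>
    (Finset.univ.filter (fun i : Fin k => (j : ℕ) < (Es i).card)).image (fun i => g i j)
    with hFs
  refine ⟨Fs, ?_, ?_⟩
  · ext a
    simp only [Finset.mem_biUnion, Finset.mem_univ, true_and, hFs, Finset.mem_image,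
      Finset.mem_filter]
    constructor
    · rintro ⟨i, hai⟩
      have hr : a ∈ Set.range ((Es i).orderEmbOfFin rfl) := by
        rw [Finset.range_orderEmbOfFin]; exact hai
      obtain ⟨⟨j', hj'⟩, hj'eq⟩ := hr
      refine ⟨⟨j', lt_of_lt_of_le hj' (hcard i)⟩, i, hj', ?_⟩
      rw [hg]
      dsimp only
      rw [dif_pos]
      exact hj'eq
    · rintro ⟨j, i, -, rfl⟩
      exact ⟨i, hgmem i j⟩
  · intro j
    refine schreier_dom n (Fs j) _ θ hmins ?_ ?_ ?_
    · intro a ha b hb hab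
      rw [hFs] at ha hb
      simp only [Finset.coe_image, Set.mem_image, Finset.mem_coe, Finset.mem_filter] at ha hb
      obtain ⟨i, ⟨-, hij⟩, rfl⟩ := ha
      obtain ⟨i', ⟨-, hij'⟩, rfl⟩ := hb
      have hii' : i < i' := by
        rcases lt_trichotomy i i' with h | rfl | h
        · exact h
        · exact absurd hab (lt_irrefl _)
        · exact absurd (hlt i' i h _ (hgmem i' j) _ (hgmem i j)) (not_lt.2 hab.le)
      rw [hθ i _ (hgmem i j), hθ i' _ (hgmem i' j)]
      exact hlt i i' hii' _ (Finset.mem_coe.1 (Nat.sInf_mem (Finset.coe_nonempty.2 (hne i))))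
        _ (Finset.mem_coe.1 (Nat.sInf_mem (Finset.coe_nonempty.2 (hne i'))))
    · intro x hx
      rw [hFs] at hx
      simp only [Finset.mem_image, Finset.mem_filter] at hx
      obtain ⟨i, -, rfl⟩ := hx
      rw [hθ i _ (hgmem i j)]
      exact Nat.sInf_le (Finset.mem_coe.2 (hgmem i j))
    · intro x hx
      rw [hFs] at hx
      simp only [Finset.mem_image, Finset.mem_filter] at hx
      obtain ⟨i, -, rfl⟩ := hx
      rw [hθ i _ (hgmem i j)]
      exact Finset.mem_image_of_mem _ (Finset.mem_univ i)
end

section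
/- For all positive integers n and m, if E ∈ S_n * A_m and m ≤ min E, then E ∈ S_{n+1}. Explicitly: if E = E_1 ∪ … ∪ E_k where E_1 < … < E_k are finite subsets of ℕ with #E_i ≤ m for each i and {min E_1, …, min E_k} ∈ S_n, and if m ≤ min E, then E belongs to the Schreier family S_{n+1}. -/
lemma sInf_mem_finset {E : Finset ℕ} (h : E.Nonempty) : sInf (↑E : Set ℕ) ∈ E := by
  exact_mod_cast Nat.sInf_mem (by exact_mod_cast h : (↑E : Set ℕ).Nonempty)

lemma sInf_le_finset {E : Finset ℕ} {a : ℕ} (h : a ∈ E) : sInf (↑E : Set ℕ) ≤ a :=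
  Nat.sInf_le (by exact_mod_cast h)

lemma aux_main : ∀ n, 1 ≤ n → ∀ (m : ℕ), 0 < m →
    ∀ (k : ℕ) (Es : Fin k → Finset ℕ),
    (∀ i, (Es i).Nonempty) →
    (∀ i, (Es i).card ≤ m) →
    (∀ i j : Fin k, i < j → FinsetLT (Es i) (Es j)) →
    (Finset.image (fun i => sInf (↑(Es i) : Set ℕ)) Finset.univ) ∈ Schreier n →
    (∀ x ∈ Finset.univ.biUnion Es, m ≤ x) →
    Finset.univ.biUnion Es ∈ Schreier (n + 1) := by
  intro n hn
  induction n, hn using Nat.le_induction with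
  | base =>
    intro m hm k Es hne hcard hlt hmins hminE
    refine Or.inr ⟨k, Es, ?_, hne, hlt, hmins, rfl⟩
    intro i x hx
    exact (hcard i).trans (hminE x (Finset.mem_biUnion.mpr ⟨i, Finset.mem_univ i, hx⟩))
  | succ n hn1 IH =>
    intro m hm k Es hne hcard hlt hmins hminE
    -- μ i = min of Es i
    set μ : Fin k → ℕ := fun i => sInf (↑(Es i) : Set ℕ) with hμ
    have hμmem : ∀ i, μ i ∈ Es i := fun i => sInf_mem_finset (hne i)
    have hμmono : ∀ i j : Fin k, i < j → μ i < μ j := fun i j hij =>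
      hlt i j hij _ (hμmem i) _ (hμmem j)
    have hμlt_iff : ∀ i j : Fin k, μ i < μ j → i < j := by
      intro i j h
      rcases lt_trichotomy i j with h' | h' | h'
      · exact h'
      · exact absurd h (by simp [h'])
      · exact absurd (hμmono j i h') (by omega)
    obtain ⟨n', rfl⟩ : ∃ n', n = n' + 1 := ⟨n - 1, by omega⟩
    rcases hmins with hM0 | ⟨p, Ms, hMs_mem, hMs_ne, hMs_lt, hMs_mins, hMeq⟩
    · -- mins set empty ⇒ k = 0 ⇒ E = ∅
      left
      rcases Nat.eq_zero_or_pos k with rfl | hk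
      · simp
      · exfalso
        have : μ ⟨0, hk⟩ ∈ Finset.image μ Finset.univ :=
          Finset.mem_image_of_mem μ (Finset.mem_univ _)
        rw [hM0] at this; simp at this
    · -- groups
      set G : Fin p → Finset (Fin k) := fun j => Finset.univ.filter (fun i => μ i ∈ Ms j) with hG
      have hmemM : ∀ {x}, x ∈ Finset.image μ Finset.univ ↔ ∃ i, μ i = x := by
        intro x; simp
      -- every element of Ms j comes from some i ∈ G j
      have hMsrc : ∀ (j : Fin p) {x}, x ∈ Ms j → ∃ i, i ∈ G j ∧ μ i = x := by
        intro j x hx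
        have hxM : x ∈ Finset.image μ Finset.univ := by
          rw [hMeq]; exact Finset.mem_biUnion.mpr ⟨j, Finset.mem_univ j, hx⟩
        obtain ⟨i, hi⟩ := hmemM.mp hxM
        exact ⟨i, by simp [hG, hi, hx], hi⟩
      set Esj : ∀ j : Fin p, Fin (G j).card → Finset ℕ :=
        fun j i => Es ((G j).orderIsoOfFin rfl i) with hEsj
      have hiso_mem : ∀ (j : Fin p) (i : Fin (G j).card),
          ((G j).orderIsoOfFin rfl i : Fin k) ∈ G j := fun j i =>
        ((G j).orderIsoOfFin rfl i).2
      -- F j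
      set F : Fin p → Finset ℕ := fun j => Finset.univ.biUnion (Esj j) with hF
      have hFmem : ∀ (j : Fin p) {x}, x ∈ F j ↔ ∃ i, i ∈ G j ∧ x ∈ Es i := by
        intro j x
        constructor
        · intro hx
          obtain ⟨i, _, hxi⟩ := Finset.mem_biUnion.mp hx
          exact ⟨_, hiso_mem j i, hxi⟩
        · rintro ⟨i, hiG, hxi⟩
          obtain ⟨i', hi'⟩ := ((G j).orderIsoOfFin rfl).surjective ⟨i, hiG⟩
          refine Finset.mem_biUnion.mpr ⟨i', Finset.mem_univ _, ?_⟩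
          simp only [hEsj, hi', hxi]
      have hFsubE : ∀ (j : Fin p) {x}, x ∈ F j → x ∈ Finset.univ.biUnion Es := by
        intro j x hx
        obtain ⟨i, _, hxi⟩ := (hFmem j).mp hx
        exact Finset.mem_biUnion.mpr ⟨i, Finset.mem_univ i, hxi⟩
      -- image of mins over group j equals Ms j
      have himg : ∀ j : Fin p,
          Finset.image (fun i => sInf (↑(Esj j i) : Set ℕ)) Finset.univ = Ms j := by
        intro j
        apply Finset.ext
        intro x
        simp only [Finset.mem_image, Finset.mem_univ, true_and]
        constructor
        · rintro ⟨i, rfl⟩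
          have := hiso_mem j i
          simp only [hG, Finset.mem_filter] at this
          exact this.2
        · intro hx
          obtain ⟨i, hiG, hix⟩ := hMsrc j hx
          obtain ⟨i', hi'⟩ := ((G j).orderIsoOfFin rfl).surjective ⟨i, hiG⟩
          exact ⟨i', by simp only [hEsj, hi']; exact hix⟩
      -- F j ∈ Schreier (n'+2)
      have hFSch : ∀ j, F j ∈ Schreier (n' + 1 + 1) := by
        intro j
        apply IH m hm (G j).card (Esj j)
        · intro i; exact hne _
        · intro i; exact hcard _
        · intro i i' hii'
          exact hlt _ _ (by exact_mod_cast ((G j).orderIsoOfFin rfl).lt_iff_lt.mpr hii')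
        · rw [himg j]; exact hMs_mem j
        · intro x hx
          exact hminE x (hFsubE j hx)
      -- F j nonempty
      have hFne : ∀ j, (F j).Nonempty := by
        intro j
        obtain ⟨x, hx⟩ := hMs_ne j
        obtain ⟨i, hiG, hix⟩ := hMsrc j hx
        exact ⟨μ i, (hFmem j).mpr ⟨i, hiG, hμmem i⟩⟩
      -- F increasing
      have hFlt : ∀ j j' : Fin p, j < j' → FinsetLT (F j) (F j') := by
        intro j j' hjj' a ha b hb
        obtain ⟨i, hiG, hai⟩ := (hFmem j).mp ha
        obtain ⟨i', hiG', hbi⟩ := (hFmem j').mp hb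
        simp only [hG, Finset.mem_filter] at hiG hiG'
        have hμμ : μ i < μ i' := hMs_lt j j' hjj' _ hiG.2 _ hiG'.2
        exact hlt i i' (hμlt_iff i i' hμμ) a hai b hbi
      -- sInf (F j) = sInf (Ms j)
      have hsInfF : ∀ j, sInf (↑(F j) : Set ℕ) = sInf (↑(Ms j) : Set ℕ) := by
        intro j
        apply le_antisymm
        · obtain ⟨i, hiG, hix⟩ := hMsrc j (sInf_mem_finset (hMs_ne j))
          exact hix ▸ sInf_le_finset ((hFmem j).mpr ⟨i, hiG, hμmem i⟩)
        · have hmemF := sInf_mem_finset (hFne j)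
          obtain ⟨i, hiG, hai⟩ := (hFmem j).mp hmemF
          simp only [hG, Finset.mem_filter] at hiG
          calc sInf (↑(Ms j) : Set ℕ) ≤ μ i := sInf_le_finset hiG.2
            _ ≤ _ := sInf_le_finset hai
      -- union
      have hUnion : Finset.univ.biUnion Es = Finset.univ.biUnion F := by
        apply Finset.ext
        intro x
        simp only [Finset.mem_biUnion, Finset.mem_univ, true_and]
        constructor
        · rintro ⟨i, hxi⟩
          have : μ i ∈ Finset.univ.biUnion Ms := by
            rw [← hMeq]; exact Finset.mem_image_of_mem μ (Finset.mem_univ i)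
          obtain ⟨j, _, hj⟩ := Finset.mem_biUnion.mp this
          exact ⟨j, (hFmem j).mpr ⟨i, by simp [hG, hj], hxi⟩⟩
        · rintro ⟨j, hxj⟩
          obtain ⟨i, _, hxi⟩ := (hFmem j).mp hxj
          exact ⟨i, hxi⟩
      refine Or.inr ⟨p, F, hFSch, hFne, hFlt, ?_, hUnion⟩
      have : (Finset.image (fun j => sInf (↑(F j) : Set ℕ)) Finset.univ)
          = Finset.image (fun j => sInf (↑(Ms j) : Set ℕ)) Finset.univ := by
        apply Finset.image_congr
        intro j _
        exact hsInfF j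
      rw [this]
      exact hMs_mins

/-- if `E ∈ S_n * A_m` and `m ≤ min E`, then `E ∈ S_{n+1}`: explicitly, if
`E = E₁ ∪ … ∪ E_k` with `E₁ < … < E_k` finite subsets of `ℕ`, `#E_i ≤ m` for each `i`,
`{min E_i : i} ∈ S_n`, and `m ≤ min E`, then `E ∈ S_{n+1}`. -/
theorem stmt_2 (n m : ℕ) (hn : 0 < n) (hm : 0 < m)
    (k : ℕ) (Es : Fin k → Finset ℕ)
    (hne : ∀ i, (Es i).Nonempty)
    (hcard : ∀ i, (Es i).card ≤ m)
    (hlt : ∀ i j : Fin k, i < j → FinsetLT (Es i) (Es j))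
    (hmins : (Finset.image (fun i => sInf (↑(Es i) : Set ℕ)) Finset.univ) ∈ Schreier n)
    (hminE : ∀ x ∈ Finset.univ.biUnion Es, m ≤ x) :
    Finset.univ.biUnion Es ∈ Schreier (n + 1) := by
  exact aux_main n hn m hm k Es hne hcard hlt hmins hminE
end

section
/- For all nonnegative integers n and m, the convolution of Schreier families satisfies S_n * S_m = S_{n+m}. -/
/-- The block of `E` determined by a cut-point set `F` at cut point `f`:
elements of `E` that are `≥ f` but below every element of `F` larger than `f`. -/
def blk (E F : Finset ℕ) (f : ℕ) : Finset ℕ :=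
  E.filter (fun x => f ≤ x ∧ ∀ f' ∈ F, f < f' → x < f')

lemma mem_blk {E F : Finset ℕ} {f x : ℕ} :
    x ∈ blk E F f ↔ x ∈ E ∧ f ≤ x ∧ ∀ f' ∈ F, f < f' → x < f' := by
  simp [blk]

lemma self_mem_blk {E : Finset ℕ} (F : Finset ℕ) {f : ℕ} (hf : f ∈ E) : f ∈ blk E F f :=
  mem_blk.2 ⟨hf, le_rfl, fun _ _ h => h⟩

lemma blk_subset {E F : Finset ℕ} {f : ℕ} : blk E F f ⊆ E :=
  Finset.filter_subset _ _

/-- Alternative "cut point" characterization of membership in a convolution. -/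
def ConvMem (M N : Set (Finset ℕ)) (E : Finset ℕ) : Prop :=
  E = ∅ ∨ ∃ F, F ∈ M ∧ F ⊆ E ∧ (∀ x ∈ E, ∃ f ∈ F, f ≤ x) ∧ ∀ f ∈ F, blk E F f ∈ N

lemma exists_blk {E F : Finset ℕ} (hcov : ∀ x ∈ E, ∃ f ∈ F, f ≤ x) {x : ℕ} (hx : x ∈ E) :
    ∃ f ∈ F, x ∈ blk E F f := by
  obtain ⟨f, hf, hfx⟩ := hcov x hx
  set T := F.filter (fun y => y ≤ x) with hTdef
  have hT : T.Nonempty := ⟨f, Finset.mem_filter.2 ⟨hf, hfx⟩⟩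
  have h₀ := Finset.mem_filter.1 (T.max'_mem hT)
  refine ⟨T.max' hT, h₀.1, mem_blk.2 ⟨hx, h₀.2, ?_⟩⟩
  intro f' hf' hlt
  by_contra h
  push_neg at h
  have hle : f' ≤ T.max' hT := Finset.le_max' T f' (Finset.mem_filter.2 ⟨hf', h⟩)
  omega

lemma sInf_finset_eq {B : Finset ℕ} {b : ℕ} (hb : b ∈ B) (hle : ∀ x ∈ B, b ≤ x) :
    sInf (↑B : Set ℕ) = b := by
  refine le_antisymm (Nat.sInf_le (by exact_mod_cast hb)) ?_
  have hmem : sInf (↑B : Set ℕ) ∈ (↑B : Set ℕ) :=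
    Nat.sInf_mem ⟨b, by exact_mod_cast hb⟩
  exact hle _ (by exact_mod_cast hmem)

lemma sInf_blk {E F : Finset ℕ} {f : ℕ} (hf : f ∈ E) :
    sInf (↑(blk E F f) : Set ℕ) = f :=
  sInf_finset_eq (self_mem_blk F hf) (fun _ hx => (mem_blk.1 hx).2.1)

lemma conv_iff {M N : Set (Finset ℕ)} {E : Finset ℕ} :
    E ∈ SchreierConv M N ↔ ConvMem M N E := by
  constructor
  · rintro (rfl | ⟨k, Es, hN, hne, hord, hM, rfl⟩)
    · exact Or.inl rfl
    rcases Nat.eq_zero_or_pos k with rfl | hk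
    · left; simp
    right
    set m : Fin k → ℕ := fun i => sInf (↑(Es i) : Set ℕ) with hm
    have hmem : ∀ i, m i ∈ Es i := fun i => by
      have := Nat.sInf_mem (s := (↑(Es i) : Set ℕ)) (by exact_mod_cast hne i)
      exact_mod_cast this
    have hle : ∀ i, ∀ x ∈ Es i, m i ≤ x := fun i x hx => Nat.sInf_le (by exact_mod_cast hx)
    refine ⟨Finset.image m Finset.univ, hM, ?_, ?_, ?_⟩
    · intro x hx
      obtain ⟨i, _, rfl⟩ := Finset.mem_image.1 hx
      exact Finset.mem_biUnion.2 ⟨i, Finset.mem_univ i, hmem i⟩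
    · intro x hx
      obtain ⟨i, _, hi⟩ := Finset.mem_biUnion.1 hx
      exact ⟨m i, Finset.mem_image.2 ⟨i, Finset.mem_univ i, rfl⟩, hle i x hi⟩
    · intro f hf
      obtain ⟨i, _, rfl⟩ := Finset.mem_image.1 hf
      have hEq : blk (Finset.univ.biUnion Es) (Finset.image m Finset.univ) (m i) = Es i := by
        ext x
        rw [mem_blk]
        constructor
        · rintro ⟨hxE, hmx, hP⟩
          obtain ⟨j, _, hj⟩ := Finset.mem_biUnion.1 hxE
          rcases lt_trichotomy j i with hji | rfl | hij
          · exact absurd (hord j i hji x hj (m i) (hmem i)) (by omega)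
          · exact hj
          · have h1 : m i < m j := hord i j hij (m i) (hmem i) (m j) (hmem j)
            have h2 : x < m j := hP (m j) (Finset.mem_image.2 ⟨j, Finset.mem_univ j, rfl⟩) h1
            exact absurd (hle j x hj) (by omega)
        · intro hx
          refine ⟨Finset.mem_biUnion.2 ⟨i, Finset.mem_univ i, hx⟩, hle i x hx, ?_⟩
          intro f' hf' hlt
          obtain ⟨j, _, rfl⟩ := Finset.mem_image.1 hf'
          rcases lt_trichotomy j i with hji | rfl | hij
          · exact absurd (hord j i hji (m j) (hmem j) (m i) (hmem i)) (by omega)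
          · omega
          · exact hord i j hij x hx (m j) (hmem j)
      rw [hEq]
      exact hN i
  · rintro (rfl | ⟨F, hFM, hFE, hcov, hblk⟩)
    · exact Or.inl rfl
    rcases Finset.eq_empty_or_nonempty E with rfl | hE
    · exact Or.inl rfl
    right
    have hFne : F.Nonempty := by
      obtain ⟨x, hx⟩ := hE
      obtain ⟨f, hf, _⟩ := hcov x hx
      exact ⟨f, hf⟩
    set e := F.orderIsoOfFin rfl with he
    have hcoe : ∀ i : Fin F.card, (e i : ℕ) ∈ F := fun i => (e i).2
    have hcoe_lt : ∀ i j : Fin F.card, i < j → (e i : ℕ) < (e j : ℕ) := by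
      intro i j hij
      exact Subtype.coe_lt_coe.2 (e.strictMono hij)
    refine ⟨F.card, fun i => blk E F (e i), fun i => hblk _ (hcoe i), ?_, ?_, ?_, ?_⟩
    · exact fun i => ⟨_, self_mem_blk F (hFE (hcoe i))⟩
    · intro i j hij a ha b hb
      have ha' := mem_blk.1 ha
      have hb' := mem_blk.1 hb
      exact lt_of_lt_of_le (ha'.2.2 _ (hcoe j) (hcoe_lt i j hij)) hb'.2.1
    · have himg : Finset.image (fun i => sInf (↑(blk E F (e i)) : Set ℕ)) Finset.univ = F := by
        ext f
        simp only [Finset.mem_image, Finset.mem_univ, true_and]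
        constructor
        · rintro ⟨i, rfl⟩
          rw [sInf_blk (hFE (hcoe i))]
          exact hcoe i
        · intro hf
          refine ⟨e.symm ⟨f, hf⟩, ?_⟩
          rw [sInf_blk (hFE (hcoe _))]
          simp
      rw [himg]
      exact hFM
    · ext x
      simp only [Finset.mem_biUnion, Finset.mem_univ, true_and]
      constructor
      · intro hx
        obtain ⟨f, hf, hxb⟩ := exists_blk hcov hx
        refine ⟨e.symm ⟨f, hf⟩, ?_⟩
        have heq : (e (e.symm ⟨f, hf⟩) : ℕ) = f := by simp
        rw [heq]
        exact hxb
      · rintro ⟨i, hi⟩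
        exact (mem_blk.1 hi).1

/-- The key composition identity for blocks. -/
lemma blk_comp {E F G : Finset ℕ} {g f : ℕ} (hGF : G ⊆ F) (hf : f ∈ blk F G g) :
    blk (blk E G g) (blk F G g) f = blk E F f := by
  rcases mem_blk.1 hf with ⟨hfF, hgf, hP1⟩
  ext x
  simp only [mem_blk]
  constructor
  · rintro ⟨⟨hxE, _, hP2⟩, hfx, hP3⟩
    refine ⟨hxE, hfx, ?_⟩
    intro f' hf' hlt
    by_cases hb : f' ∈ blk F G g
    · exact hP3 f' (mem_blk.1 hb) hlt
    · have hgf' : g ≤ f' := le_trans hgf (le_of_lt hlt)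
      have hex : ∃ g' ∈ G, g < g' ∧ g' ≤ f' := by
        by_contra hc
        push_neg at hc
        exact hb (mem_blk.2 ⟨hf', hgf', fun g' hg' hgg' => hc g' hg' hgg'⟩)
      obtain ⟨g', hg', hgg', hg'f'⟩ := hex
      exact lt_of_lt_of_le (hP2 g' hg' hgg') hg'f'
  · rintro ⟨hxE, hfx, hP4⟩
    refine ⟨⟨hxE, le_trans hgf hfx, ?_⟩, hfx, ?_⟩
    · intro g' hg' hgg'
      exact hP4 g' (hGF hg') (hP1 g' hg' hgg')
    · intro f' hf' hlt
      exact hP4 f' hf'.1 hlt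

lemma conv_assoc (M N P : Set (Finset ℕ)) :
    SchreierConv (SchreierConv M N) P = SchreierConv M (SchreierConv N P) := by
  ext E
  rw [conv_iff, conv_iff]
  constructor
  · rintro (rfl | ⟨F, hFMN, hFE, hcov, hblk⟩)
    · exact Or.inl rfl
    rcases Finset.eq_empty_or_nonempty E with rfl | hE
    · exact Or.inl rfl
    have hFne : F.Nonempty := by
      obtain ⟨x, hx⟩ := hE
      obtain ⟨f, hf, _⟩ := hcov x hx
      exact ⟨f, hf⟩
    rw [conv_iff] at hFMN
    rcases hFMN with rfl | ⟨G, hGM, hGF, hcovF, hblkF⟩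
    · exact absurd rfl (Finset.nonempty_iff_ne_empty.1 hFne)
    right
    refine ⟨G, hGM, hGF.trans hFE, ?_, ?_⟩
    · intro x hx
      obtain ⟨f, hf, hfx⟩ := hcov x hx
      obtain ⟨g, hg, hgf⟩ := hcovF f hf
      exact ⟨g, hg, hgf.trans hfx⟩
    intro g hg
    rw [conv_iff]
    right
    refine ⟨blk F G g, hblkF g hg, ?_, ?_, ?_⟩
    · intro x hx
      rcases mem_blk.1 hx with ⟨h1, h2, h3⟩
      exact mem_blk.2 ⟨hFE h1, h2, h3⟩
    · intro x hx
      rcases mem_blk.1 hx with ⟨hxE, hgx, hPx⟩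
      obtain ⟨f, hf, hxf⟩ := exists_blk hcov hxE
      rcases mem_blk.1 hxf with ⟨_, hfx, hPf⟩
      have hgF : g ∈ F := hGF hg
      have hgf : g ≤ f := by
        by_contra h
        push_neg at h
        exact absurd (hPf g hgF h) (by omega)
      refine ⟨f, mem_blk.2 ⟨hf, hgf, ?_⟩, hfx⟩
      intro g' hg' hgg'
      exact lt_of_le_of_lt hfx (hPx g' hg' hgg')
    · intro f hf
      rw [blk_comp hGF hf]
      exact hblk f (blk_subset hf)
  · rintro (rfl | ⟨G, hGM, hGE, hcov, hblk⟩)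
    · exact Or.inl rfl
    rcases Finset.eq_empty_or_nonempty E with rfl | hE
    · exact Or.inl rfl
    right
    have hch : ∀ g : ℕ, ∃ Fg : Finset ℕ, g ∈ G →
        Fg ∈ N ∧ Fg ⊆ blk E G g ∧ (∀ x ∈ blk E G g, ∃ f ∈ Fg, f ≤ x) ∧
        ∀ f ∈ Fg, blk (blk E G g) Fg f ∈ P := by
      intro g
      by_cases hg : g ∈ G
      · have hb := hblk g hg
        rw [conv_iff] at hb
        rcases hb with h0 | ⟨Fg, h1, h2, h3, h4⟩
        · exfalso
          have := self_mem_blk G (hGE hg) (f := g)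
          rw [h0] at this
          simp at this
        · exact ⟨Fg, fun _ => ⟨h1, h2, h3, h4⟩⟩
      · exact ⟨∅, fun h => absurd h hg⟩
    choose Fg hFg using hch
    have hGsub : ∀ g ∈ G, g ∈ Fg g := by
      intro g hg
      obtain ⟨f, hf, hfg⟩ := (hFg g hg).2.2.1 g (self_mem_blk G (hGE hg))
      have hgf : g ≤ f := (mem_blk.1 ((hFg g hg).2.1 hf)).2.1
      have : f = g := le_antisymm hfg hgf
      rwa [this] at hf
    set F := G.biUnion Fg with hF
    have hGsubF : G ⊆ F := fun g hg => Finset.mem_biUnion.2 ⟨g, hg, hGsub g hg⟩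
    have hFE : F ⊆ E := by
      intro x hx
      obtain ⟨g, hg, hxg⟩ := Finset.mem_biUnion.1 hx
      exact blk_subset ((hFg g hg).2.1 hxg)
    have hFblk : ∀ g ∈ G, blk F G g = Fg g := by
      intro g hg
      ext x
      constructor
      · intro hx
        rcases mem_blk.1 hx with ⟨hxF, hgx, hPx⟩
        obtain ⟨g'', hg'', hxg''⟩ := Finset.mem_biUnion.1 hxF
        rcases mem_blk.1 ((hFg g'' hg'').2.1 hxg'') with ⟨_, hg''x, hPg''⟩
        rcases lt_trichotomy g'' g with h | rfl | h
        · exact absurd (hPg'' g hg h) (by omega)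
        · exact hxg''
        · exact absurd (hPx g'' hg'' h) (by omega)
      · intro hx
        rcases mem_blk.1 ((hFg g hg).2.1 hx) with ⟨hxE, hgx, hPx⟩
        exact mem_blk.2 ⟨Finset.mem_biUnion.2 ⟨g, hg, hx⟩, hgx, hPx⟩
    refine ⟨F, ?_, hFE, ?_, ?_⟩
    · rw [conv_iff]
      right
      refine ⟨G, hGM, hGsubF, ?_, ?_⟩
      · intro x hx
        obtain ⟨g, hg, hxg⟩ := Finset.mem_biUnion.1 hx
        exact ⟨g, hg, (mem_blk.1 ((hFg g hg).2.1 hxg)).2.1⟩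
      · intro g hg
        rw [hFblk g hg]
        exact (hFg g hg).1
    · intro x hx
      obtain ⟨g, hg, hgx⟩ := hcov x hx
      exact ⟨g, hGsubF hg, hgx⟩
    · intro f hf
      obtain ⟨g, hg, hfg⟩ := Finset.mem_biUnion.1 hf
      have hf' : f ∈ blk F G g := by rw [hFblk g hg]; exact hfg
      rw [← blk_comp hGsubF hf', hFblk g hg]
      exact (hFg g hg).2.2.2 f hfg

lemma empty_mem_schreier : ∀ n, (∅ : Finset ℕ) ∈ Schreier n
  | 0 => by simp [Schreier]
  | 1 => by intro k hk; simp at hk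
  | (n + 2) => Or.inl rfl

lemma blk_full {E : Finset ℕ} {f : ℕ} (hcov : ∀ x ∈ E, f ≤ x) : blk E {f} f = E := by
  ext x
  rw [mem_blk]
  constructor
  · exact fun h => h.1
  · intro hx
    refine ⟨hx, hcov x hx, ?_⟩
    intro f' hf' hlt
    rw [Finset.mem_singleton] at hf'
    omega

lemma conv_left_unit {N : Set (Finset ℕ)} (hN : ∅ ∈ N) :
    SchreierConv (Schreier 0) N = N := by
  ext E
  rw [conv_iff]
  constructor
  · rintro (rfl | ⟨F, hF1, hFE, hcov, hblk⟩)
    · exact hN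
    rcases Finset.eq_empty_or_nonempty E with rfl | hE
    · exact hN
    have hFne : F.Nonempty := by
      obtain ⟨x, hx⟩ := hE
      obtain ⟨f, hf, _⟩ := hcov x hx
      exact ⟨f, hf⟩
    have hcard : F.card = 1 :=
      le_antisymm hF1 (Finset.one_le_card.2 hFne)
    obtain ⟨f, rfl⟩ := Finset.card_eq_one.1 hcard
    have hcov' : ∀ x ∈ E, f ≤ x := by
      intro x hx
      obtain ⟨f', hf', hfx⟩ := hcov x hx
      rw [Finset.mem_singleton] at hf'
      omega
    have := hblk f (Finset.mem_singleton_self f)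
    rwa [blk_full hcov'] at this
  · intro hE
    rcases Finset.eq_empty_or_nonempty E with rfl | hEne
    · exact Or.inl rfl
    right
    refine ⟨{E.min' hEne}, ?_, ?_, ?_, ?_⟩
    · simp [Schreier]
    · exact Finset.singleton_subset_iff.2 (E.min'_mem hEne)
    · exact fun x hx => ⟨E.min' hEne, Finset.mem_singleton_self _, E.min'_le x hx⟩
    · intro f hf
      rw [Finset.mem_singleton] at hf
      subst hf
      rw [blk_full (fun x hx => E.min'_le x hx)]
      exact hE

lemma conv_right_unit {M : Set (Finset ℕ)} (hM : ∅ ∈ M) :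
    SchreierConv M (Schreier 0) = M := by
  ext E
  rw [conv_iff]
  constructor
  · rintro (rfl | ⟨F, hFM, hFE, hcov, hblk⟩)
    · exact hM
    have hEF : E = F := by
      apply Finset.Subset.antisymm _ hFE
      intro x hx
      obtain ⟨f, hf, hxb⟩ := exists_blk hcov hx
      have hcard : (blk E F f).card ≤ 1 := hblk f hf
      have hfb : f ∈ blk E F f := self_mem_blk F (hFE hf)
      have : x = f := Finset.card_le_one.1 hcard x hxb f hfb
      rwa [this]
    rwa [hEF]
  · intro hE
    rcases Finset.eq_empty_or_nonempty E with rfl | hEne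
    · exact Or.inl rfl
    right
    refine ⟨E, hE, Finset.Subset.refl E, fun x hx => ⟨x, hx, le_rfl⟩, ?_⟩
    intro f hf
    have hsub : blk E E f ⊆ {f} := by
      intro x hx
      rcases mem_blk.1 hx with ⟨hxE, hfx, hPx⟩
      rw [Finset.mem_singleton]
      by_contra h
      have : f < x := lt_of_le_of_ne hfx (Ne.symm h)
      exact absurd (hPx x hxE this) (by omega)
    calc (blk E E f).card ≤ ({f} : Finset ℕ).card := Finset.card_le_card hsub
      _ = 1 := Finset.card_singleton f

lemma schreier_succ (n : ℕ) :
    Schreier (n + 1) = SchreierConv SchreierOne (Schreier n) := by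
  cases n with
  | zero =>
    have h : (∅ : Finset ℕ) ∈ SchreierOne := empty_mem_schreier 1
    rw [conv_right_unit h]
    rfl
  | succ k => rfl

/-- for all `n, m ≥ 0`, the convolution of Schreier families satisfies
`S_n * S_m = S_{n+m}`. -/
theorem stmt_3 (n m : ℕ) : SchreierConv (Schreier n) (Schreier m) = Schreier (n + m) := by
  induction n with
  | zero =>
    rw [Nat.zero_add]
    exact conv_left_unit (empty_mem_schreier m)
  | succ k ih =>
    have harith : k + 1 + m = k + m + 1 := by omega
    rw [harith, schreier_succ k, conv_assoc, ih, ← schreier_succ (k + m)]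
end

section
/- For every n ≥ 0 and every infinite subset L of ℕ with l_1 = min L: (a) the supremum norm of the repeated average satisfies ‖a(n,L)‖_∞ = l_1^{-n}; and (b) the nonzero coordinates of a(n,L) are nonincreasing, i.e., if supp a(n,L) = {i_1 < … < i_d} then a(n,L)(i_1) ≥ a(n,L)(i_2) ≥ … ≥ a(n,L)(i_d). -/
/-- The iterated removal of supports used in the definition of repeated averages:
`L₁ = L`, `L_{k+1} = L_k \ supp (f (L_k))`. -/
noncomputable def iterRem (f : Set ℕ → (ℕ →₀ ℝ)) (L : Set ℕ) : ℕ → Set ℕ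
  | 0 => L
  | k + 1 => iterRem f L k \ ↑(f (iterRem f L k)).support

/-- The repeated averages `a(n, L) ∈ c₀₀(ℕ)`: `a(0, L) = e_{min L}` and
`a(n+1, L) = (1 / l₁) (a(n, L₁) + … + a(n, L_{l₁}))`, where `l₁ = min L`, `L₁ = L` and
`L_{k+1} = L_k \ supp a(n, L_k)`. -/
noncomputable def repAvg : ℕ → Set ℕ → (ℕ →₀ ℝ) :=
  Nat.rec (fun L => Finsupp.single (sInf L) 1)
    (fun _ ih L => ((sInf L : ℕ) : ℝ)⁻¹ • ∑ k ∈ Finset.range (sInf L), ih (iterRem ih L k))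

open Finset in
lemma repAvg_key : ∀ (n : ℕ) (L : Set ℕ), L.Infinite → 0 ∉ L →
    (↑(repAvg n L).support ⊆ L) ∧
    (∀ k, 0 ≤ repAvg n L k) ∧
    (repAvg n L (sInf L) = ((sInf L : ℕ) : ℝ)⁻¹ ^ n) ∧
    (∀ k, repAvg n L k ≤ ((sInf L : ℕ) : ℝ)⁻¹ ^ n) ∧
    (∀ i ∈ (repAvg n L).support, ((i : ℕ) : ℝ)⁻¹ ^ n ≤ repAvg n L i) ∧
    (∀ i ∈ (repAvg n L).support, ∀ j ∈ L, j ≤ i → j ∈ (repAvg n L).support) ∧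
    (∀ i j, i ∈ (repAvg n L).support → j ∈ (repAvg n L).support → i ≤ j →
      repAvg n L j ≤ repAvg n L i) := by
  intro n
  induction n with
  | zero =>
    intro L hL h0
    have hrL : sInf L ∈ L := Nat.sInf_mem hL.nonempty
    have hsupp : (repAvg 0 L).support = {sInf L} :=
      Finsupp.support_single_ne_zero _ one_ne_zero
    have hval : ∀ k, repAvg 0 L k = if sInf L = k then 1 else 0 := fun k =>
      Finsupp.single_apply
    refine ⟨?_, ?_, ?_, ?_, ?_, ?_, ?_⟩
    · rw [hsupp]; simpa using hrL
    · intro k; rw [hval]; positivity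
    · simp [hval]
    · intro k; rw [hval]; split <;> norm_num
    · intro i hi; rw [hsupp] at hi; simp at hi; subst hi; simp [hval]
    · intro i hi j hjL hji
      rw [hsupp] at hi ⊢; simp at hi ⊢; subst hi
      exact le_antisymm hji (Nat.sInf_le hjL)
    · intro i j hi hj _
      rw [hsupp] at hi hj; simp at hi hj; subst hi; subst hj; exact le_rfl
  | succ n IH =>
    intro L hL h0
    have hrL : sInf L ∈ L := Nat.sInf_mem hL.nonempty
    have hr1 : 1 ≤ sInf L := Nat.one_le_iff_ne_zero.2 (fun h => h0 (h ▸ hrL))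
    set r : ℕ := sInf L with hrdef
    have hrR : (0:ℝ) < (r:ℝ)⁻¹ := by
      have : (0:ℝ) < (r:ℝ) := by exact_mod_cast hr1
      positivity
    set M : ℕ → Set ℕ := iterRem (repAvg n) L with hM
    set b : ℕ → (ℕ →₀ ℝ) := fun k => repAvg n (M k) with hb
    have hM0 : M 0 = L := rfl
    have hMsucc : ∀ k, M (k+1) = M k \ ↑(b k).support := fun k => rfl
    -- chain facts
    have hchain : ∀ k, (M k).Infinite ∧ 0 ∉ M k ∧ M k ⊆ L := by
      intro k
      induction k with
      | zero => exact ⟨hL, h0, subset_rfl⟩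
      | succ k ih =>
        rw [hMsucc]
        exact ⟨ih.1.diff (Finset.finite_toSet _), fun h => ih.2.1 h.1,
          fun x hx => ih.2.2 hx.1⟩
    have hMmono : ∀ {k k'}, k ≤ k' → M k' ⊆ M k := by
      intro k k' h
      induction h with
      | refl => exact subset_rfl
      | step h ih => exact fun x hx => ih ((hMsucc _ ▸ hx : _).1)
    have hsInfM : ∀ k, r ≤ sInf (M k) := by
      intro k
      exact Nat.sInf_le ((hchain k).2.2 (Nat.sInf_mem (hchain k).1.nonempty))
    -- IH applied to each M k
    have HI : ∀ k, (↑(b k).support ⊆ M k) ∧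
        (∀ j, 0 ≤ b k j) ∧
        (b k (sInf (M k)) = ((sInf (M k) : ℕ) : ℝ)⁻¹ ^ n) ∧
        (∀ j, b k j ≤ ((sInf (M k) : ℕ) : ℝ)⁻¹ ^ n) ∧
        (∀ i ∈ (b k).support, ((i : ℕ) : ℝ)⁻¹ ^ n ≤ b k i) ∧
        (∀ i ∈ (b k).support, ∀ j ∈ M k, j ≤ i → j ∈ (b k).support) ∧
        (∀ i j, i ∈ (b k).support → j ∈ (b k).support → i ≤ j → b k j ≤ b k i) :=
      fun k => IH (M k) (hchain k).1 (hchain k).2.1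
    -- separation
    have hsep : ∀ k, ∀ i ∈ (b k).support, ∀ j ∈ M (k+1), i < j := by
      intro k i hi j hj
      rw [hMsucc] at hj
      by_contra h
      exact hj.2 ((HI k).2.2.2.2.2.1 i hi j hj.1 (le_of_not_gt h))
    have hsep' : ∀ {k k'}, k < k' → ∀ i ∈ (b k).support, ∀ j ∈ M k', i < j :=
      fun {k k'} hkk' i hi j hj => hsep k i hi j (hMmono hkk' hj)
    have hdisj : ∀ {k k'}, k < k' → ∀ j ∈ (b k').support, j ∉ (b k).support := by
      intro k k' hkk' j hj hjk
      exact absurd rfl (hsep' hkk' j hjk j ((HI k').1 hj)).ne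
    -- value formula
    have hvsum : ∀ j, repAvg (n+1) L j = (r:ℝ)⁻¹ * ∑ k ∈ range r, b k j := by
      intro j
      show (((r:ℕ):ℝ)⁻¹ • ∑ k ∈ range r, b k) j = _
      rw [Finsupp.smul_apply, Finsupp.finset_sum_apply]
      simp
    have hval : ∀ j, ∀ k0 ∈ range r, j ∈ (b k0).support →
        repAvg (n+1) L j = (r:ℝ)⁻¹ * b k0 j := by
      intro j k0 hk0 hj
      rw [hvsum, Finset.sum_eq_single_of_mem k0 hk0]
      intro k _ hne
      rcases hne.lt_or_gt with h | h
      · by_contra hz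
        exact hdisj h j hj (Finsupp.mem_support_iff.2 hz)
      · by_contra hz
        exact hdisj h j (Finsupp.mem_support_iff.2 hz) hj
    have hval0 : ∀ j, (∀ k ∈ range r, j ∉ (b k).support) → repAvg (n+1) L j = 0 := by
      intro j h
      rw [hvsum, Finset.sum_eq_zero, mul_zero]
      intro k hk
      exact Finsupp.notMem_support_iff.1 (h k hk)
    have hsuppiff : ∀ j, j ∈ (repAvg (n+1) L).support ↔ ∃ k ∈ range r, j ∈ (b k).support := by
      intro j
      constructor
      · intro hj
        by_contra h
        push_neg at h
        exact Finsupp.mem_support_iff.1 hj (hval0 j h)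
      · rintro ⟨k, hk, hjk⟩
        rw [Finsupp.mem_support_iff, hval j k hk hjk]
        exact (mul_ne_zero hrR.ne' (Finsupp.mem_support_iff.1 hjk))
    refine ⟨?_, ?_, ?_, ?_, ?_, ?_, ?_⟩
    · -- support ⊆ L
      intro j hj
      obtain ⟨k, hk, hjk⟩ := (hsuppiff j).1 hj
      exact (hchain k).2.2 ((HI k).1 hjk)
    · -- nonneg
      intro j
      rw [hvsum]
      exact mul_nonneg hrR.le (Finset.sum_nonneg fun k _ => (HI k).2.1 j)
    · -- value at sInf L
      have h0r : (0:ℕ) ∈ range r := Finset.mem_range.2 hr1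
      have hM0inf : sInf (M 0) = r := by rw [hM0]
      have hmem : r ∈ (b 0).support := by
        rw [Finsupp.mem_support_iff]
        rw [show b 0 r = b 0 (sInf (M 0)) by rw [hM0inf], (HI 0).2.2.1, hM0inf]
        positivity
      rw [hval r 0 h0r hmem, show b 0 r = b 0 (sInf (M 0)) by rw [hM0inf],
        (HI 0).2.2.1, hM0inf, pow_succ]
      ring
    · -- upper bound
      intro j
      by_cases hj : ∃ k ∈ range r, j ∈ (b k).support
      · obtain ⟨k, hk, hjk⟩ := hj
        rw [hval j k hk hjk, pow_succ]
        rw [mul_comm ((r:ℝ)⁻¹ ^ n) _]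
        apply mul_le_mul_of_nonneg_left _ hrR.le
        calc b k j ≤ ((sInf (M k) : ℕ) : ℝ)⁻¹ ^ n := (HI k).2.2.2.1 j
          _ ≤ (r:ℝ)⁻¹ ^ n := by
              apply pow_le_pow_left₀ (by positivity)
              apply inv_anti₀ (by exact_mod_cast hr1)
              exact_mod_cast hsInfM k
      · push_neg at hj
        rw [hval0 j hj]
        positivity
    · -- lower bound on support
      intro j hj
      obtain ⟨k, hk, hjk⟩ := (hsuppiff j).1 hj
      have hjMk : j ∈ M k := (HI k).1 hjk
      have hrj : r ≤ j := le_trans (hsInfM k) (Nat.sInf_le hjMk)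
      have hj1 : 1 ≤ j := le_trans hr1 hrj
      rw [hval j k hk hjk, pow_succ, mul_comm ((j:ℝ)⁻¹ ^ n) _]
      apply mul_le_mul
      · exact inv_anti₀ (by exact_mod_cast hr1) (by exact_mod_cast hrj)
      · exact (HI k).2.2.2.2.1 j hjk
      · positivity
      · exact hrR.le
    · -- initial segment
      intro i hi j hjL hji
      obtain ⟨k, hk, hik⟩ := (hsuppiff i).1 hi
      -- claim: j ∈ M k ∨ ∃ k' < k, j ∈ supp b k'
      have hclaim : ∀ m, j ∈ M m ∨ ∃ k' < m, j ∈ (b k').support := by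
        intro m
        induction m with
        | zero => exact Or.inl (hM0 ▸ hjL)
        | succ m ih =>
          rcases ih with h | ⟨k', hk', hjk'⟩
          · by_cases hjs : j ∈ (b m).support
            · exact Or.inr ⟨m, Nat.lt_succ_self m, hjs⟩
            · exact Or.inl (by rw [hMsucc]; exact ⟨h, hjs⟩)
          · exact Or.inr ⟨k', hk'.trans (Nat.lt_succ_self m), hjk'⟩
      rcases hclaim k with h | ⟨k', hk', hjk'⟩
      · exact (hsuppiff j).2 ⟨k, hk, (HI k).2.2.2.2.2.1 i hik j h hji⟩
      · exact (hsuppiff j).2 ⟨k', Finset.mem_range.2 (hk'.trans (Finset.mem_range.1 hk)), hjk'⟩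
    · -- monotone
      intro i j hi hj hij
      obtain ⟨k, hk, hik⟩ := (hsuppiff i).1 hi
      obtain ⟨k', hk', hjk'⟩ := (hsuppiff j).1 hj
      rw [hval i k hk hik, hval j k' hk' hjk']
      rcases lt_trichotomy k k' with h | h | h
      · -- i ≤ sInf (M k')
        have hisInf : i ≤ sInf (M k') :=
          (hsep' h i hik _ (Nat.sInf_mem (hchain k').1.nonempty)).le
        have hi1 : 1 ≤ i := le_trans hr1 (le_trans (hsInfM k) (Nat.sInf_le ((HI k).1 hik)))
        apply mul_le_mul_of_nonneg_left _ hrR.le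
        calc b k' j ≤ ((sInf (M k') : ℕ) : ℝ)⁻¹ ^ n := (HI k').2.2.2.1 j
          _ ≤ ((i:ℕ):ℝ)⁻¹ ^ n := by
              apply pow_le_pow_left₀ (by positivity)
              apply inv_anti₀ (by exact_mod_cast hi1)
              exact_mod_cast hisInf
          _ ≤ b k i := (HI k).2.2.2.2.1 i hik
      · subst h
        exact mul_le_mul_of_nonneg_left ((HI k).2.2.2.2.2.2 i j hik hjk' hij) hrR.le
      · exfalso
        have : j < i := hsep' h j hjk' i ((HI k).1 hik)
        omega

/-- for `n ≥ 0` and infinite `L ⊆ ℕ` with `l₁ = min L` (and `0 ∉ L`):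
(a) `‖a(n,L)‖_∞ = l₁^{-n}`; (b) the nonzero coordinates of `a(n,L)` are nonincreasing. -/
theorem stmt_6 (n : ℕ) (L : Set ℕ) (hL : L.Infinite) (h0 : 0 ∉ L) :
    IsGreatest (Set.range fun k => |repAvg n L k|) (((sInf L : ℕ) : ℝ)⁻¹ ^ n) ∧
    (∀ i j : ℕ, i ∈ (repAvg n L).support → j ∈ (repAvg n L).support → i ≤ j →
      repAvg n L j ≤ repAvg n L i) := by
  obtain ⟨-, hnn, hmax, hub, -, -, hmono⟩ := repAvg_key n L hL h0
  refine ⟨⟨⟨sInf L, ?_⟩, ?_⟩, fun i j hi hj hij => hmono i j hi hj hij⟩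
  · simp only [abs_of_nonneg (hnn (sInf L)), hmax]
    exact abs_of_nonneg (by positivity)
  · rintro x ⟨k, rfl⟩
    simp only [abs_of_nonneg (hnn k)]
    exact hub k
end

section
/- Let n ≥ 1 and let L be an infinite subset of ℕ. Then for every set F in the Schreier family S_{n-1}, the sum of the coordinates of the repeated average a(n,L) over F satisfies Σ_{k∈F} a(n,L)(k) < 3/(min L). -/
open Finset Function

/-- `ℕ` contains `0` here; the index sets of the paper are infinite sets of positive integers. -/
def PosInfinite (M : Set ℕ) : Prop := M.Infinite ∧ 0 ∉ M

theorem PosInfinite.sInf_mem {M : Set ℕ} (hM : PosInfinite M) : sInf M ∈ M :=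
  Nat.sInf_mem hM.1.nonempty

theorem PosInfinite.sInf_pos {M : Set ℕ} (hM : PosInfinite M) : 0 < sInf M :=
  Nat.pos_of_ne_zero fun h => hM.2 (h ▸ hM.sInf_mem)

theorem PosInfinite.diff_finset {M : Set ℕ} (hM : PosInfinite M) (s : Finset ℕ) :
    PosInfinite (M \ s) :=
  ⟨hM.1.sdiff s.finite_toSet, fun h => hM.2 h.1⟩

theorem PosInfinite.iterRem {M : Set ℕ} (hM : PosInfinite M) (f : Set ℕ → ℕ →₀ ℝ) :
    ∀ k, PosInfinite (_root_.iterRem f M k)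
  | 0 => hM
  | k + 1 => (hM.iterRem f k).diff_finset _

section iterRem

variable (f : Set ℕ → ℕ →₀ ℝ) (M : Set ℕ)

theorem iterRem_antitone : Antitone (iterRem f M) :=
  antitone_nat_of_succ_le fun _ => Set.sdiff_subset

theorem iterRem_subset (k : ℕ) : iterRem f M k ⊆ M :=
  iterRem_antitone f M (Nat.zero_le k)

theorem iterRem_eq_diff_biUnion :
    ∀ j, iterRem f M j = M \ ↑((range j).biUnion fun k => (f (iterRem f M k)).support)
  | 0 => by simp [iterRem]
  | j + 1 => by
    rw [range_add_one, biUnion_insert, coe_union, Set.union_comm, ← Set.sdiff_sdiff,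
      ← iterRem_eq_diff_biUnion j]
    rfl

end iterRem

section repAvg

theorem repAvg_zero (M : Set ℕ) : repAvg 0 M = Finsupp.single (sInf M) 1 := rfl

theorem repAvg_succ (n : ℕ) (M : Set ℕ) : repAvg (n + 1) M =
    ((sInf M : ℕ) : ℝ)⁻¹ • ∑ k ∈ range (sInf M), repAvg n (iterRem (repAvg n) M k) := rfl

theorem repAvg_succ_apply (n : ℕ) (M : Set ℕ) (x : ℕ) : repAvg (n + 1) M x =
    ((sInf M : ℕ) : ℝ)⁻¹ * ∑ k ∈ range (sInf M), repAvg n (iterRem (repAvg n) M k) x := by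
  rw [repAvg_succ, Finsupp.smul_apply, Finsupp.finsetSum_apply, smul_eq_mul]

theorem repAvg_nonneg : ∀ (n : ℕ) (M : Set ℕ) (x : ℕ), 0 ≤ repAvg n M x
  | 0, M, x => by
    rw [repAvg_zero, Finsupp.single_apply]
    split_ifs <;> norm_num
  | n + 1, M, x => by
    rw [repAvg_succ_apply]
    exact mul_nonneg (by positivity) (sum_nonneg fun k _ => repAvg_nonneg n _ x)

variable {n : ℕ} {M : Set ℕ}

theorem support_repAvg_succ (hl : 0 < sInf M) : (repAvg (n + 1) M).support =
    (range (sInf M)).biUnion fun k => (repAvg n (iterRem (repAvg n) M k)).support := by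
  ext x
  simp only [Finsupp.mem_support_iff, repAvg_succ_apply, mem_biUnion, ne_eq, mul_eq_zero,
    inv_eq_zero, Nat.cast_eq_zero, hl.ne', false_or,
    sum_eq_zero_iff_of_nonneg fun k _ => repAvg_nonneg n _ x, not_forall, exists_prop]

theorem sum_repAvg (hM : PosInfinite M) : (repAvg n M).sum (fun _ v => v) = 1 := by
  induction n generalizing M with
  | zero => simp [repAvg_zero]
  | succ n ih =>
    have hl : ((sInf M : ℕ) : ℝ) ≠ 0 := by exact_mod_cast hM.sInf_pos.ne'
    rw [repAvg_succ, Finsupp.sum_smul_index fun _ => rfl, ← Finsupp.mul_sum,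
      ← Finsupp.sum_finsetSum_index (fun _ => rfl) fun _ _ _ => rfl,
      sum_congr rfl fun k _ => ih (hM.iterRem _ k)]
    simp [hl]

theorem sum_repAvg_le_one (hM : PosInfinite M) (F : Finset ℕ) :
    ∑ x ∈ F, repAvg n M x ≤ 1 := by
  calc ∑ x ∈ F, repAvg n M x ≤ ∑ x ∈ F ∪ (repAvg n M).support, repAvg n M x :=
        sum_le_sum_of_subset_of_nonneg subset_union_left fun x _ _ => repAvg_nonneg n M x
    _ = (repAvg n M).sum (fun _ v => v) :=
        (sum_subset subset_union_right fun x _ hx => Finsupp.notMem_support_iff.1 hx).symm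
    _ = 1 := sum_repAvg hM

theorem support_repAvg_nonempty (hM : PosInfinite M) : (repAvg n M).support.Nonempty := by
  rw [nonempty_iff_ne_empty]
  intro h
  simpa [Finsupp.sum, h] using sum_repAvg (n := n) hM

theorem support_repAvg_subset (hM : PosInfinite M) : ↑(repAvg n M).support ⊆ M := by
  induction n generalizing M with
  | zero =>
    rw [repAvg_zero, Finsupp.support_single _ one_ne_zero, coe_singleton,
      Set.singleton_subset_iff]
    exact hM.sInf_mem
  | succ n ih =>
    rw [support_repAvg_succ hM.sInf_pos, coe_biUnion]
    exact Set.iUnion₂_subset fun k _ => (ih (hM.iterRem _ k)).trans (iterRem_subset _ M k)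

theorem lt_of_mem_support_repAvg (hM : PosInfinite M) {x y : ℕ}
    (hx : x ∈ (repAvg n M).support) (hy : y ∈ M \ ↑(repAvg n M).support) : x < y := by
  induction n generalizing M x y with
  | zero =>
    rw [repAvg_zero, Finsupp.support_single _ one_ne_zero, mem_singleton] at hx
    subst hx
    exact (Nat.sInf_le hy.1).lt_of_ne fun h => hy.2 (by simp [repAvg_zero, h])
  | succ n ih =>
    rw [support_repAvg_succ hM.sInf_pos] at hx hy
    obtain ⟨k, hk, hxk⟩ := mem_biUnion.1 hx
    refine ih (hM.iterRem _ k) hxk ?_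
    rw [← iterRem, iterRem_eq_diff_biUnion]
    refine ⟨hy.1, fun hy' => hy.2 ?_⟩
    exact biUnion_subset_biUnion_of_subset_left _
      (range_subset_range.2 (mem_range.1 hk)) hy'

theorem lt_sInf_diff_support_repAvg (hM : PosInfinite M) {x : ℕ}
    (hx : x ∈ (repAvg n M).support) : x < sInf (M \ ↑(repAvg n M).support) :=
  lt_of_mem_support_repAvg hM hx (Nat.sInf_mem (hM.diff_finset _).1.nonempty)

theorem pairwise_disjoint_support_repAvg_iterRem (hM : PosInfinite M) :
    Pairwise (Disjoint on fun k => (repAvg n (iterRem (repAvg n) M k)).support) :=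
  (pairwise_disjoint_on _).2 fun _ k hjk => disjoint_left.2 fun _ hxj hxk =>
    (iterRem_antitone _ M hjk (support_repAvg_subset (hM.iterRem _ k) hxk)).2 hxj

theorem sInf_le_card_support_repAvg_succ (hM : PosInfinite M) :
    sInf M ≤ #(repAvg (n + 1) M).support := by
  rw [support_repAvg_succ hM.sInf_pos,
    card_biUnion ((pairwise_disjoint_support_repAvg_iterRem hM).set_pairwise _)]
  simpa using sum_le_sum fun k (_ : k ∈ range (sInf M)) =>
    show 1 ≤ _ from card_pos.2 (support_repAvg_nonempty (n := n) (hM.iterRem _ k))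

theorem two_mul_sInf_le_sInf_diff_support (hM : PosInfinite M) :
    2 * sInf M ≤ sInf (M \ ↑(repAvg (n + 1) M).support) := by
  have hsub : (repAvg (n + 1) M).support ⊆
      Ico (sInf M) (sInf (M \ ↑(repAvg (n + 1) M).support)) := fun x hx =>
    mem_Ico.2 ⟨Nat.sInf_le (support_repAvg_subset hM hx), lt_sInf_diff_support_repAvg hM hx⟩
  have := (sInf_le_card_support_repAvg_succ hM).trans (card_le_card hsub)
  rw [Nat.card_Ico] at this
  omega

theorem diff_support_repAvg_succ (hM : PosInfinite M) :
    M \ ↑(repAvg (n + 1) M).support = iterRem (repAvg n) M (sInf M) := by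
  rw [iterRem_eq_diff_biUnion, support_repAvg_succ hM.sInf_pos]

theorem repAvg_succ_apply_le (hM : PosInfinite M) (x : ℕ) :
    repAvg (n + 1) M x ≤ ((sInf M : ℕ) : ℝ)⁻¹ := by
  rw [repAvg_succ_apply]
  refine mul_le_of_le_one_right (by positivity) ?_
  by_cases h : ∃ k ∈ range (sInf M), x ∈ (repAvg n (iterRem (repAvg n) M k)).support
  · obtain ⟨k, hk, hx⟩ := h
    rw [sum_eq_single_of_mem k hk fun j _ hjk => Finsupp.notMem_support_iff.1 fun hxj =>
      disjoint_left.1 (pairwise_disjoint_support_repAvg_iterRem hM hjk) hxj hx]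
    simpa using sum_repAvg_le_one (hM.iterRem _ k) {x}
  · simp only [not_exists, not_and] at h
    rw [sum_eq_zero fun k hk => Finsupp.notMem_support_iff.1 (h k hk)]
    exact zero_le_one

end repAvg

theorem schreierOne_subset_schreierConv :
    SchreierOne ⊆ SchreierConv SchreierOne (Schreier 0) := by
  intro F hF
  have himage : image (F.orderEmbOfFin rfl) univ = F := image_orderEmbOfFin_univ F rfl
  refine Or.inr ⟨#F, fun i => {F.orderEmbOfFin rfl i}, fun i => (card_singleton _).le,
    fun i => singleton_nonempty _, fun i j hij a ha b hb => ?_, ?_, ?_⟩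
  · rw [mem_singleton] at ha hb
    subst ha hb
    exact (F.orderEmbOfFin rfl).strictMono hij
  · simpa [himage] using hF
  · rw [biUnion_singleton, himage]

theorem schreier_succ_subset : ∀ n, Schreier (n + 1) ⊆ SchreierConv SchreierOne (Schreier n)
  | 0 => schreierOne_subset_schreierConv
  | _ + 1 => subset_rfl

theorem card_le_sInf_of_image_mem_schreierOne {d : ℕ} {E : Fin d → Finset ℕ}
    (hne : ∀ i, (E i).Nonempty) (hlt : ∀ i j, i < j → FinsetLT (E i) (E j))
    (h : image (fun i => sInf (↑(E i) : Set ℕ)) univ ∈ SchreierOne) (i : Fin d) :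
    d ≤ sInf (↑(E i) : Set ℕ) := by
  have hmem : ∀ i, sInf (↑(E i) : Set ℕ) ∈ E i := fun i => Nat.sInf_mem (hne i).to_set
  have hinj : Injective fun i => sInf (↑(E i) : Set ℕ) :=
    StrictMono.injective fun i j hij => hlt i j hij _ (hmem i) _ (hmem j)
  simpa [card_image_of_injective _ hinj] using h _ (mem_image_of_mem _ (mem_univ i))

theorem FinsetLT.disjoint {E F : Finset ℕ} (h : FinsetLT E F) : Disjoint E F :=
  disjoint_left.2 fun x hE hF => lt_irrefl x (h x hE x hF)

section Meets

variable {d : ℕ} (E : Fin d → Finset ℕ) (B : ℕ → Finset ℕ)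

theorem sum_biUnion_le_card_meets_mul
    (hE : (↑(univ : Finset (Fin d)) : Set (Fin d)).PairwiseDisjoint E) (f : ℕ →₀ ℝ) {δ : ℝ}
    (h : ∀ i, ∑ x ∈ E i, f x ≤ δ) :
    ∑ x ∈ univ.biUnion E, f x ≤ #{i | (E i ∩ f.support).Nonempty} * δ := by
  rw [sum_biUnion hE,
    ← sum_filter_of_ne (p := fun i => (E i ∩ f.support).Nonempty) fun i _ hi => ?_]
  · simpa using sum_le_card_nsmul _ _ _ fun i _ => h i
  · by_contra h'
    exact hi (sum_eq_zero fun x hx => Finsupp.notMem_support_iff.1 fun hxf =>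
      h' ⟨x, mem_inter.2 ⟨hx, hxf⟩⟩)

theorem card_meets_and_meets_earlier_le_one (hE : ∀ i j, i < j → FinsetLT (E i) (E j))
    (hB : ∀ j k, j < k → FinsetLT (B j) (B k)) (k : ℕ) :
    #{i | (E i ∩ B k).Nonempty ∧ ∃ j < k, (E i ∩ B j).Nonempty} ≤ 1 := by
  have key : ∀ a b, a < b → (E a ∩ B k).Nonempty → ∀ j < k, ¬(E b ∩ B j).Nonempty := by
    rintro a b hab ⟨y, hy⟩ j hj ⟨z, hz⟩
    rw [mem_inter] at hy hz
    exact (hE a b hab y hy.1 z hz.1).not_gt (hB j k hj z hz.2 y hy.2)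
  refine card_le_one.2 fun a ha b hb => ?_
  simp only [mem_filter, mem_univ, true_and] at ha hb
  obtain ⟨j, hj, hbj⟩ := hb.2
  obtain ⟨j', hj', haj'⟩ := ha.2
  rcases lt_trichotomy a b with hab | hab | hab
  · exact absurd hbj (key a b hab ha.1 j hj)
  · exact hab
  · exact absurd haj' (key b a hab hb.1 j' hj')

theorem sum_card_meets_first_le (l : ℕ) :
    ∑ k ∈ range l, #{i | (E i ∩ B k).Nonempty ∧ ∀ j < k, ¬(E i ∩ B j).Nonempty} ≤ d := by
  rw [← card_biUnion]
  · exact (card_le_univ _).trans (Fintype.card_fin d).le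
  · refine ((pairwise_disjoint_on _).2 fun j k hjk =>
      disjoint_left.2 fun i hj hk => ?_).set_pairwise _
    simp only [mem_filter, mem_univ, true_and] at hj hk
    exact hk.2 j hjk hj.1

theorem card_meets_le_card_meets_first_add_one (hE : ∀ i j, i < j → FinsetLT (E i) (E j))
    (hB : ∀ j k, j < k → FinsetLT (B j) (B k)) (k : ℕ) :
    #{i | (E i ∩ B k).Nonempty} ≤
      #{i | (E i ∩ B k).Nonempty ∧ ∀ j < k, ¬(E i ∩ B j).Nonempty} + 1 := by
  refine (card_le_card fun i hi => ?_).trans ((card_union_le _ _).trans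
    (add_le_add_right (card_meets_and_meets_earlier_le_one E B hE hB k) _))
  simp only [mem_filter, mem_univ, true_and, mem_union] at hi ⊢
  by_cases h : ∀ j < k, ¬(E i ∩ B j).Nonempty
  · exact Or.inl ⟨hi, h⟩
  · push Not at h
    exact Or.inr ⟨hi, h⟩

end Meets

theorem two_mul_le_two_pow (n : ℕ) : 2 * n ≤ 2 ^ n := by
  cases n with
  | zero => simp
  | succ q =>
    rw [pow_succ']
    have := Nat.lt_two_pow_self (n := q)
    omega

theorem min_one_le_half_add_half (x : ℝ) : min 1 x ≤ 1 / 2 + x / 2 := by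
  rcases min_cases 1 x with ⟨h, h'⟩ | ⟨h, h'⟩ <;> rw [h] <;> linarith

theorem le_add_min_one_mul {s e δ : ℝ} (h1 : s ≤ 1) (h2 : s ≤ (e + 1) * δ) (hδ : 0 ≤ δ) :
    s ≤ δ + min 1 (e * δ) := by
  rcases min_cases 1 (e * δ) with ⟨h, -⟩ | ⟨h, -⟩ <;> rw [h] <;> linarith

theorem three_mul_div_le_two_sub {p : ℕ} (hp : p < 2) {l ν : ℝ} (hl : 0 < l)
    (hν : 2 ^ (1 + p) * l ≤ ν) : 3 * l / ν ≤ 2 - p := by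
  rw [div_le_iff₀ (by nlinarith [pow_pos (two_pos : (0 : ℝ) < 2) (1 + p)])]
  interval_cases p <;> norm_num at hν ⊢ <;> nlinarith

theorem two_mul_add_le_sub_one_mul_two_pow {k0 p t : ℕ} {μ : ℝ} (hp : 2 ≤ p)
    (hμ : 2 ^ k0 * (k0 + 1 + p) ≤ μ) (ht : μ < 3 * t) : 2 * (k0 + p : ℝ) ≤ (t - 1) * 2 ^ p := by
  have hp' : (2 : ℝ) ≤ p := by exact_mod_cast hp
  have h4p : (4 : ℝ) ≤ 2 ^ p := by
    calc (4 : ℝ) = 2 ^ 2 := by norm_num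
      _ ≤ 2 ^ p := pow_le_pow_right₀ (by norm_num) hp
  rcases Nat.eq_zero_or_pos k0 with rfl | hk0
  · have : (2 * p : ℝ) ≤ 2 ^ p := by exact_mod_cast two_mul_le_two_pow p
    have : (2 : ℝ) ≤ t := by
      have : 1 < t := by exact_mod_cast (show (1 : ℝ) < t by push_cast at hμ; linarith)
      exact_mod_cast this
    push_cast
    nlinarith
  · have h2k : (2 : ℝ) ≤ 2 ^ k0 := by
      calc (2 : ℝ) = 2 ^ 1 := by norm_num
        _ ≤ 2 ^ k0 := pow_le_pow_right₀ (by norm_num) hk0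
    have : 2 * (k0 + 1 + p : ℝ) - 3 ≤ 3 * (t - 1) := by nlinarith
    nlinarith

/-- The arithmetic core of the block estimate: `μ`, `M` and `ν` are the minima of the first block
`k₀` meeting `F`, of the next block and of what remains after all `k₀ + 1 + p` blocks, and `X` is
the mass of the `t` pieces of `F` that start in block `k₀`. -/
theorem add_three_mul_div_le_of_doubling {k0 p t : ℕ} {μ M ν X : ℝ} (hp : 2 ≤ p)
    (hμ : 2 ^ k0 * (k0 + 1 + p) ≤ μ) (hM : 2 * μ ≤ M) (hν : 2 ^ p * M ≤ ν)
    (hX1 : X ≤ 1) (hXt : X ≤ t * (3 / μ - 3 / M)) :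
    X + 3 * (k0 + p) / ν ≤ 1 + 3 * (t - 1) / (2 * M) := by
  have hμl : (k0 + 1 + p : ℝ) ≤ μ :=
    le_trans (le_mul_of_one_le_left (by positivity) (one_le_pow₀ (by norm_num))) hμ
  have hμ0 : 0 < μ := by linarith
  have hM0 : 0 < M := by linarith
  have h4p : (4 : ℝ) ≤ 2 ^ p := by
    calc (4 : ℝ) = 2 ^ 2 := by norm_num
      _ ≤ 2 ^ p := pow_le_pow_right₀ (by norm_num) hp
  have hν0 : 0 < ν := by nlinarith
  rcases le_or_gt (3 * (t : ℝ)) μ with ht | ht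
  · have hν4 : 3 * (k0 + p) / ν ≤ 3 * (k0 + p) / (4 * M) :=
      div_le_div_of_nonneg_left (by positivity) (by positivity) (by nlinarith)
    have key : t * (3 / μ - 3 / M) + 3 * (k0 + p) / (4 * M) ≤ 1 + 3 * (t - 1) / (2 * M) := by
      rw [← sub_nonneg]
      have e : 1 + 3 * (t - 1) / (2 * M) - (t * (3 / μ - 3 / M) + 3 * (k0 + p) / (4 * M))
          = (4 * M * (μ - 3 * t) + 18 * t * μ - 6 * μ - 3 * (k0 + p) * μ) / (4 * M * μ) := by
        field_simp
        ring
      rw [e]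
      apply div_nonneg _ (by positivity)
      nlinarith [mul_le_mul_of_nonneg_right hM (sub_nonneg.2 ht)]
    linarith
  · have hcount := two_mul_add_le_sub_one_mul_two_pow hp hμ ht
    have : 3 * (k0 + p) / ν ≤ 3 * (t - 1) / (2 * M) := by
      rw [div_le_div_iff₀ hν0 (by positivity)]
      nlinarith [mul_le_mul_of_nonneg_right hcount hM0.le]
    linarith

section Doubling

variable {μ : ℕ → ℝ}

theorem pow_mul_le_of_two_mul_le (hμ : ∀ k, 2 * μ k ≤ μ (k + 1)) (a : ℕ) :
    ∀ j, 2 ^ j * μ a ≤ μ (a + j)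
  | 0 => by simp
  | j + 1 => by
    have := pow_mul_le_of_two_mul_le hμ a j
    rw [pow_succ', mul_assoc, ← add_assoc]
    linarith [hμ (a + j)]

theorem pos_of_two_mul_le (hμ : ∀ k, 2 * μ k ≤ μ (k + 1)) (h0 : 0 < μ 0) (k : ℕ) : 0 < μ k := by
  have := pow_mul_le_of_two_mul_le hμ 0 k
  rw [zero_add] at this
  nlinarith [pow_pos (two_pos : (0 : ℝ) < 2) k]

theorem three_div_sub_three_div_nonneg (hμ : ∀ k, 2 * μ k ≤ μ (k + 1)) (h0 : 0 < μ 0) (k : ℕ) :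
    0 ≤ 3 / μ k - 3 / μ (k + 1) := by
  have hk := pos_of_two_mul_le hμ h0 k
  rw [sub_nonneg]
  exact div_le_div_of_nonneg_left (by norm_num) hk (by linarith [hμ k])

/-- The first term is bounded through `min 1 x ≤ (1 + x) / 2`, the others through
`2 * μ a ≤ μ k`. -/
theorem sum_Ico_min_one_le (hμ : ∀ k, 2 * μ k ≤ μ (k + 1)) (h0 : 0 < μ 0) {a b : ℕ}
    (hab : a < b) (e : ℕ → ℕ) :
    ∑ k ∈ Ico a b, min 1 (e k * (3 / μ k - 3 / μ (k + 1))) ≤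
      1 / 2 + 3 / (2 * μ a) * ∑ k ∈ Ico a b, (e k : ℝ) := by
  have hpos := pos_of_two_mul_le hμ h0
  have hmono : Monotone μ := monotone_nat_of_le_succ fun k => by linarith [hμ k, hpos k]
  have hfirst : min 1 (e a * (3 / μ a - 3 / μ (a + 1))) ≤ 1 / 2 + 3 / (2 * μ a) * e a := by
    have : e a * (3 / μ a - 3 / μ (a + 1)) ≤ e a * (3 / μ a) :=
      mul_le_mul_of_nonneg_left (by linarith [div_pos three_pos (hpos (a + 1))])
        (Nat.cast_nonneg _)
    have : 3 / (2 * μ a) * e a = e a * (3 / μ a) / 2 := by field_simp [(hpos a).ne']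
    linarith [min_one_le_half_add_half (e a * (3 / μ a - 3 / μ (a + 1)))]
  have hrest : ∀ k ∈ Ico (a + 1) b,
      min 1 (e k * (3 / μ k - 3 / μ (k + 1))) ≤ 3 / (2 * μ a) * e k := by
    intro k hk
    have h2 : 2 * μ a ≤ μ k := (hμ a).trans (hmono (mem_Ico.1 hk).1)
    have : 3 / μ k - 3 / μ (k + 1) ≤ 3 / (2 * μ a) := by
      linarith [div_le_div_of_nonneg_left (show (0 : ℝ) ≤ 3 by norm_num)
        (by linarith [hpos a]) h2, div_pos three_pos (hpos (k + 1))]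
    calc min 1 (e k * (3 / μ k - 3 / μ (k + 1))) ≤ e k * (3 / μ k - 3 / μ (k + 1)) :=
          min_le_right _ _
      _ ≤ e k * (3 / (2 * μ a)) := mul_le_mul_of_nonneg_left this (Nat.cast_nonneg _)
      _ = 3 / (2 * μ a) * e k := mul_comm _ _
  rw [sum_eq_sum_Ico_succ_bot hab, sum_eq_sum_Ico_succ_bot hab, mul_add, mul_sum]
  linarith [sum_le_sum hrest]

theorem sum_Ico_le_of_block_bounds (hμ : ∀ k, 2 * μ k ≤ μ (k + 1)) (h0 : 0 < μ 0) {a b : ℕ}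
    (hab : a < b) {S : ℕ → ℝ} {e : ℕ → ℕ} (hS_le_one : ∀ k, S k ≤ 1)
    (hS : ∀ k, S k ≤ (e k + 1) * (3 / μ k - 3 / μ (k + 1))) :
    ∑ k ∈ Ico a b, S k ≤ 3 / μ a - 3 / μ b + (1 / 2 + 3 / (2 * μ a) * ∑ k ∈ Ico a b, (e k : ℝ)) := by
  have hδ := three_div_sub_three_div_nonneg hμ h0
  have htel : ∑ k ∈ Ico a b, (3 / μ k - 3 / μ (k + 1)) = 3 / μ a - 3 / μ b := by
    simpa only [sub_neg_eq_add, neg_add_eq_sub] using sum_Ico_sub (fun k => -(3 / μ k)) hab.le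
  rw [← htel]
  refine (sum_le_sum fun k _ => le_add_min_one_mul (hS_le_one k) (hS k) (hδ k)).trans ?_
  rw [sum_add_distrib]
  linarith [sum_Ico_min_one_le hμ h0 hab e]

/-- `S k` is the mass the `k`-th block gives `F`, `c k` the number of pieces of `F` it meets and
`e k` the number of those it is the first block to meet. -/
theorem sum_le_three_sub_of_block_bounds {l k0 : ℕ} (hk0 : k0 < l)
    (hμ0 : μ 0 = l) (hμ : ∀ k, 2 * μ k ≤ μ (k + 1)) {S : ℕ → ℝ} {c e : ℕ → ℕ}
    (hS : ∀ k, S k ≤ c k * (3 / μ k - 3 / μ (k + 1))) (hS_le_one : ∀ k, S k ≤ 1)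
    (hc_before : ∀ k < k0, c k = 0) (hc_first : c k0 ≤ e k0) (hc : ∀ k, c k ≤ e k + 1)
    (he : ∑ k ∈ range l, (e k : ℝ) + 1 ≤ μ (k0 + 1)) :
    ∑ k ∈ range l, S k ≤ 3 - 3 * l / μ l := by
  have hl : (0 : ℝ) < l := by exact_mod_cast (show 0 < l by omega)
  have hpos := pos_of_two_mul_le hμ (hμ0 ▸ hl)
  have hδ := three_div_sub_three_div_nonneg hμ (hμ0 ▸ hl)
  have hgeo := pow_mul_le_of_two_mul_le hμ
  obtain ⟨p, rfl⟩ : ∃ p, l = k0 + 1 + p := ⟨l - (k0 + 1), by omega⟩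
  have hsplit : ∑ k ∈ range (k0 + 1 + p), S k ≤
      S k0 + ∑ k ∈ Ico (k0 + 1) (k0 + 1 + p), S k := by
    rw [← sum_range_add_sum_Ico _ (show k0 + 1 ≤ k0 + 1 + p by omega), sum_range_succ]
    have := sum_nonpos fun k (hk : k ∈ range k0) =>
      (hS k).trans_eq (by simp [hc_before k (mem_range.1 hk)])
    linarith
  refine hsplit.trans ?_
  rcases Nat.lt_or_ge p 2 with hp | hp
  · have htail : ∑ k ∈ Ico (k0 + 1) (k0 + 1 + p), S k ≤ p := by
      simpa using sum_le_card_nsmul (Ico (k0 + 1) (k0 + 1 + p)) S 1 fun k _ => hS_le_one k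
    have := three_mul_div_le_two_sub hp hl (le_trans (mul_le_mul_of_nonneg_right
      (pow_le_pow_right₀ (by norm_num) (show 1 + p ≤ k0 + 1 + p by omega)) hl.le)
      (by simpa [hμ0] using hgeo 0 (k0 + 1 + p)))
    linarith [hS_le_one k0]
  · set M := μ (k0 + 1)
    set ν := μ (k0 + 1 + p)
    set B := ∑ k ∈ Ico (k0 + 1) (k0 + 1 + p), (e k : ℝ)
    have hM0 : 0 < M := hpos _
    have hB : (e k0 : ℝ) + B + 1 ≤ M := by
      refine le_trans ?_ he
      rw [← sum_range_add_sum_Ico _ (show k0 + 1 ≤ k0 + 1 + p by omega), sum_range_succ]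
      linarith [sum_nonneg fun k (_ : k ∈ range k0) => (e k).cast_nonneg (α := ℝ)]
    have htail := sum_Ico_le_of_block_bounds hμ (hμ0 ▸ hl) (show k0 + 1 < k0 + 1 + p by omega)
      hS_le_one fun k => (hS k).trans (mul_le_mul_of_nonneg_right
        (show (c k : ℝ) ≤ e k + 1 by exact_mod_cast hc k) (hδ k))
    have hcore := add_three_mul_div_le_of_doubling (t := e k0) (X := S k0) hp
      (by simpa [hμ0] using hgeo 0 k0) (hμ k0) (hgeo (k0 + 1) p) (hS_le_one k0)
      ((hS k0).trans (mul_le_mul_of_nonneg_right (by exact_mod_cast hc_first) (hδ k0)))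
    have hBM : 3 / (2 * M) * B ≤ 3 / (2 * M) * (M - 1 - e k0) :=
      mul_le_mul_of_nonneg_left (by linarith) (by positivity)
    have e1 : 3 * ((e k0 : ℝ) - 1) / (2 * M) + 3 / M + 3 / (2 * M) * (M - 1 - e k0) = 3 / 2 := by
      field_simp
      ring
    have e2 : 3 * ((k0 : ℝ) + p) / ν + 3 / ν = 3 * ((k0 + 1 + p : ℕ) : ℝ) / ν := by
      push_cast
      ring
    linarith

end Doubling

theorem sum_sum_le_three_sub_of_blocks {l : ℕ} (hl : 0 < l) {A : ℕ → ℕ →₀ ℝ} {μ : ℕ → ℕ}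
    (hA_le_one : ∀ k (E : Finset ℕ), ∑ x ∈ E, A k x ≤ 1)
    (hμ0 : μ 0 = l) (hμ : ∀ k, 2 * μ k ≤ μ (k + 1))
    (hA_supp : ∀ k, ∀ x ∈ (A k).support, μ k ≤ x ∧ x < μ (k + 1))
    {N : Set (Finset ℕ)} (hN : ∀ E ∈ N, ∀ k, ∑ x ∈ E, A k x ≤ 3 / (μ k : ℝ) - 3 / μ (k + 1))
    {F : Finset ℕ} (hF : F ∈ SchreierConv SchreierOne N) :
    ∑ k ∈ range l, ∑ x ∈ F, A k x ≤ 3 - 3 * l / (μ l : ℝ) := by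
  have hμR : ∀ k, 2 * (μ k : ℝ) ≤ μ (k + 1) := fun k => by exact_mod_cast hμ k
  have hlμ : (l : ℝ) ≤ μ l :=
    le_trans (le_mul_of_one_le_left (Nat.cast_nonneg l) (one_le_pow₀ (by norm_num : (1 : ℝ) ≤ 2)))
      (by simpa [hμ0] using pow_mul_le_of_two_mul_le hμR 0 l)
  have hRHS : 0 ≤ 3 - 3 * l / (μ l : ℝ) := by
    rw [sub_nonneg, div_le_iff₀ (by exact_mod_cast hl.trans_le (by exact_mod_cast hlμ))]
    linarith
  rcases hF with rfl | ⟨d, E, hEN, hEne, hElt, hmin, rfl⟩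
  · simpa using hRHS
  set B : ℕ → Finset ℕ := fun k => (A k).support
  have hB : ∀ j k, j < k → FinsetLT (B j) (B k) := fun j k hjk x hx y hy =>
    (hA_supp j x hx).2.trans_le
      ((monotone_nat_of_le_succ (fun k => by linarith [hμ k]) hjk).trans (hA_supp k y hy).1)
  have hEdisj : (↑(univ : Finset (Fin d)) : Set (Fin d)).PairwiseDisjoint E :=
    ((pairwise_disjoint_on E).2 fun i j hij => (hElt i j hij).disjoint).set_pairwise _
  have hS : ∀ k, ∑ x ∈ univ.biUnion E, A k x ≤
      #{i | (E i ∩ B k).Nonempty} * (3 / (μ k : ℝ) - 3 / μ (k + 1)) := fun k =>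
    sum_biUnion_le_card_meets_mul E hEdisj (A k) fun i => hN _ (hEN i) k
  by_cases hex : ∃ k, k < l ∧ ∃ i, (E i ∩ B k).Nonempty
  · obtain ⟨hk0, i0, x0, hx0⟩ := Nat.find_spec hex
    set k0 := Nat.find hex
    have hbefore : ∀ k < k0, ∀ i, ¬(E i ∩ B k).Nonempty := fun k hk i hi =>
      Nat.find_min hex hk ⟨hk.trans hk0, i, hi⟩
    rw [mem_inter] at hx0
    refine sum_le_three_sub_of_block_bounds hk0 (by exact_mod_cast hμ0) hμR hS
      (e := fun k => #{i | (E i ∩ B k).Nonempty ∧ ∀ j < k, ¬(E i ∩ B j).Nonempty})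
      (fun k => hA_le_one k _) (fun k hk => ?_) ?_
      (fun k => card_meets_le_card_meets_first_add_one E B hElt hB k) ?_
    · simp [hbefore k hk]
    · refine card_le_card fun i hi => ?_
      simp only [mem_filter, mem_univ, true_and] at hi ⊢
      exact ⟨hi, fun j hj => hbefore j hj i⟩
    · have hd : d < μ (k0 + 1) :=
        ((card_le_sInf_of_image_mem_schreierOne hEne hElt hmin i0).trans
          (Nat.sInf_le hx0.1)).trans_lt (hA_supp k0 x0 hx0.2).2
      have := (sum_card_meets_first_le E B l).trans_lt hd
      exact_mod_cast this
  · push Not at hex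
    refine (sum_nonpos fun k hk => (hS k).trans_eq ?_).trans hRHS
    simp [hex k (mem_range.1 hk)]

theorem sum_repAvg_one_le {M : Set ℕ} (hM : PosInfinite M) {F : Finset ℕ} (hF : F ∈ Schreier 0) :
    ∑ x ∈ F, repAvg 1 M x ≤
      3 / ((sInf M : ℕ) : ℝ) - 3 / ((sInf (M \ ↑(repAvg 1 M).support) : ℕ) : ℝ) := by
  have hl : (0 : ℝ) < (sInf M : ℕ) := by exact_mod_cast hM.sInf_pos
  have hν : 2 * ((sInf M : ℕ) : ℝ) ≤ (sInf (M \ ↑(repAvg 1 M).support) : ℕ) := by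
    exact_mod_cast two_mul_sInf_le_sInf_diff_support hM
  have hF1 : (#F : ℝ) ≤ 1 := by exact_mod_cast hF
  have h3ν : 3 / ((sInf (M \ ↑(repAvg 1 M).support) : ℕ) : ℝ) ≤ 3 / (2 * (sInf M : ℕ)) :=
    div_le_div_of_nonneg_left (by norm_num) (by positivity) hν
  calc ∑ x ∈ F, repAvg 1 M x ≤ #F • ((sInf M : ℕ) : ℝ)⁻¹ :=
        sum_le_card_nsmul _ _ _ fun x _ => repAvg_succ_apply_le hM x
    _ ≤ ((sInf M : ℕ) : ℝ)⁻¹ := by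
        rw [nsmul_eq_mul]
        exact mul_le_of_le_one_left (by positivity) hF1
    _ ≤ 3 / ((sInf M : ℕ) : ℝ) - 3 / (2 * (sInf M : ℕ)) := by
        rw [show 3 / ((sInf M : ℕ) : ℝ) - 3 / (2 * (sInf M : ℕ)) = 3 / 2 * ((sInf M : ℕ) : ℝ)⁻¹ by
          field_simp; ring]
        linarith [inv_pos.2 hl]
    _ ≤ _ := by linarith

theorem sum_repAvg_succ_succ_le {n : ℕ}
    (ih : ∀ M : Set ℕ, PosInfinite M → ∀ E ∈ Schreier n, ∑ x ∈ E, repAvg (n + 1) M x ≤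
      3 / ((sInf M : ℕ) : ℝ) - 3 / ((sInf (M \ ↑(repAvg (n + 1) M).support) : ℕ) : ℝ))
    {M : Set ℕ} (hM : PosInfinite M) {F : Finset ℕ} (hF : F ∈ Schreier (n + 1)) :
    ∑ x ∈ F, repAvg (n + 2) M x ≤
      3 / ((sInf M : ℕ) : ℝ) - 3 / ((sInf (M \ ↑(repAvg (n + 2) M).support) : ℕ) : ℝ) := by
  have hT := sum_sum_le_three_sub_of_blocks hM.sInf_pos
    (A := fun k => repAvg (n + 1) (iterRem (repAvg (n + 1)) M k))
    (μ := fun k => sInf (iterRem (repAvg (n + 1)) M k))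
    (fun k E => sum_repAvg_le_one (hM.iterRem _ k) E) rfl
    (fun k => two_mul_sInf_le_sInf_diff_support (hM.iterRem _ k))
    (fun k x hx => ⟨Nat.sInf_le (support_repAvg_subset (hM.iterRem _ k) hx),
      lt_sInf_diff_support_repAvg (hM.iterRem _ k) hx⟩)
    (fun E hE k => ih _ (hM.iterRem _ k) E hE) (schreier_succ_subset n hF)
  have hl : (0 : ℝ) < (sInf M : ℕ) := by exact_mod_cast hM.sInf_pos
  simp_rw [repAvg_succ_apply (n + 1), ← mul_sum]
  rw [sum_comm, diff_support_repAvg_succ hM]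
  calc _ ≤ ((sInf M : ℕ) : ℝ)⁻¹ *
        (3 - 3 * (sInf M : ℕ) / ((sInf (iterRem (repAvg (n + 1)) M (sInf M)) : ℕ) : ℝ)) :=
        mul_le_mul_of_nonneg_left hT (by positivity)
    _ = _ := by field_simp

theorem sum_repAvg_succ_le : ∀ (n : ℕ) {M : Set ℕ}, PosInfinite M → ∀ {F : Finset ℕ},
    F ∈ Schreier n → ∑ x ∈ F, repAvg (n + 1) M x ≤
      3 / ((sInf M : ℕ) : ℝ) - 3 / ((sInf (M \ ↑(repAvg (n + 1) M).support) : ℕ) : ℝ)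
  | 0 => sum_repAvg_one_le
  | n + 1 => sum_repAvg_succ_succ_le fun _ hM _ hE => sum_repAvg_succ_le n hM hE

/-- for `n ≥ 1`, `L ⊆ ℕ` infinite (with `0 ∉ L`) and every `F ∈ S_{n-1}`,
`∑_{k ∈ F} a(n,L)(k) < 3 / min L`. -/
theorem stmt_7 (n : ℕ) (hn : 1 ≤ n) (L : Set ℕ) (hL : L.Infinite) (h0 : 0 ∉ L)
    (F : Finset ℕ) (hF : F ∈ Schreier (n - 1)) :
    ∑ k ∈ F, repAvg n L k < 3 / ((sInf L : ℕ) : ℝ) := by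
  obtain ⟨m, rfl⟩ : ∃ m, n = m + 1 := ⟨n - 1, by omega⟩
  have hL' : PosInfinite L := ⟨hL, h0⟩
  have hν : (0 : ℝ) < (sInf (L \ ↑(repAvg (m + 1) L).support) : ℕ) := by
    exact_mod_cast (hL'.diff_finset _).sInf_pos
  have := sum_repAvg_succ_le m hL' (by simpa using hF)
  linarith [div_pos three_pos hν]
end

section
/- Let T be a countably branching well-founded tree with associated tree of initial segments T̃. Let (μ_i) be a bounded and disjointly supported sequence in M_+(T̃) such that μ = w*-lim_i μ_i exists and such that for every t̃ ∈ T̃ the limit ν({t̃}) = lim_i μ_i(S(t̃)) exists. Then for every non-maximal t̃ ∈ T̃ and every enumeration (t̃_j)_{j∈ℕ} of S(t̃), the iterated limit lim_j lim_i μ_i(∪_{k≥j}(V_{t̃_k} \ {t̃_k})) exists and μ({t̃}) = ν({t̃}) + lim_j lim_i μ_i(∪_{k≥j}(V_{t̃_k} \ {t̃_k})). In particular, μ({t̃}) = ν({t̃}) if and only if this double limit is zero. -/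
/-- A countably branching well-founded tree `T = (M, ≼)` on an infinite subset `M` of `ℕ`:
`≼` is a partial order on `M` compatible with the usual order, predecessor sets are finite
chains, there is no infinite totally ordered subset, and every non-maximal node has
(countably) infinitely many immediate successors. -/
structure NatTree where
  M : Set ℕ
  infinite : M.Infinite
  r : ℕ → ℕ → Prop
  mem_left : ∀ {a b : ℕ}, r a b → a ∈ M
  mem_right : ∀ {a b : ℕ}, r a b → b ∈ M
  refl : ∀ a ∈ M, r a a
  antisymm : ∀ {a b : ℕ}, r a b → r b a → a = b
  trans : ∀ {a b c : ℕ}, r a b → r b c → r a c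
  compat : ∀ {a b : ℕ}, r a b → a ≤ b
  pred_finite : ∀ a ∈ M, {b : ℕ | r b a}.Finite
  pred_chain : ∀ a ∈ M, ∀ {b c : ℕ}, r b a → r c a → r b c ∨ r c b
  wellFounded : ∀ C : Set ℕ, C ⊆ M → (∀ a ∈ C, ∀ b ∈ C, r a b ∨ r b a) → C.Finite
  branching : ∀ a ∈ M, (∃ b, b ≠ a ∧ r a b) →
    {b : ℕ | r a b ∧ b ≠ a ∧ ∀ c, r a c → r c b → c = a ∨ c = b}.Infinite

/-- A bounded positive (countably additive) measure defined on all subsets of `α`. -/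
structure PosMeasure (α : Type*) where
  m : Set α → ℝ
  nonneg : ∀ A, 0 ≤ m A
  empty : m ∅ = 0
  cadd : ∀ A : ℕ → Set α, (Pairwise fun i j => Disjoint (A i) (A j)) →
    HasSum (fun i => m (A i)) (m (⋃ i, A i))

/-- The support of a positive measure: the set of atoms of positive mass. -/
def suppM (μ : PosMeasure ℕ) : Set ℕ := {t | 0 < μ.m {t}}

/-- `V_t = {s : t ≼ s}`, the nodes above `t`. -/
def V (T : NatTree) (t : ℕ) : Set ℕ := {s | T.r t s}

/-- `S(t)`: the set of immediate successors of a node `t`. -/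
def Succ (T : NatTree) (t : ℕ) : Set ℕ :=
  {s | T.r t s ∧ s ≠ t ∧ ∀ c, T.r t c → T.r c s → c = t ∨ c = s}

/-!
For any positive measure `p`, the partition `V_t \ {t} = S(t) ⊔ ⨆ₖ (V_{t_k} \ {t_k})` and
countable additivity give
`p(⋃_{k ≥ j} (V_{t_k} \ {t_k})) = p(V_t) - p{t} - p(S(t)) - ∑_{k < j} (p(V_{t_k}) - p{t_k})`.
Disjointness of the supports forces `μ_i{s} → 0` for every node `s`, so for `p = μ_i` the right
side tends to `L_j = μ(V_t) - ν(t) - ∑_{k < j} μ(V_{t_k})`. Since the `V_{t_k}` partition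
`V_t \ {t}`, `L_j → μ(V_t) - ν(t) - (μ(V_t) - μ{t}) = μ{t} - ν(t)`.
-/

open Filter Topology

namespace PosMeasure

variable {α : Type*} (p : PosMeasure α)

theorem m_union {A B : Set α} (h : Disjoint A B) : p.m (A ∪ B) = p.m A + p.m B := by
  classical
  let F : ℕ → Set α := fun n => if n = 0 then A else if n = 1 then B else ∅
  have hF : Pairwise fun i j => Disjoint (F i) (F j) := by
    intro i j hij
    simp only [F]
    split_ifs <;> first | omega | exact h | exact h.symm | simp
  have hU : ⋃ n, F n = A ∪ B := by
    ext x
    simp only [Set.mem_iUnion, Set.mem_union, F]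
    refine ⟨fun ⟨n, hn⟩ => ?_, ?_⟩
    · split_ifs at hn
      exacts [Or.inl hn, Or.inr hn, hn.elim]
    · rintro (hx | hx)
      exacts [⟨0, by simpa⟩, ⟨1, by simpa⟩]
  have hsum : HasSum (fun n => p.m (F n)) (p.m A + p.m B) := by
    convert hasSum_sum_of_ne_finset_zero (L := SummationFilter.unconditional ℕ) (s := {0, 1})
      (f := fun n => p.m (F n)) ?_ using 1
    · simp [F]
    · intro n hn
      simp only [Finset.mem_insert, Finset.mem_singleton, not_or] at hn
      simp [F, hn.1, hn.2, p.empty]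
  rw [← hU]
  exact (p.cadd F hF).unique hsum

theorem m_diff {A B : Set α} (h : A ⊆ B) : p.m (B \ A) = p.m B - p.m A := by
  have := p.m_union (Set.disjoint_sdiff_right (s := A) (t := B))
  rw [Set.union_sdiff_cancel h] at this
  linarith

theorem m_iUnion_ge {A : ℕ → Set α} (hA : Pairwise fun i j => Disjoint (A i) (A j)) (j : ℕ) :
    p.m (⋃ (k : ℕ) (_ : j ≤ k), A k) = p.m (⋃ k, A k) - ∑ k ∈ Finset.range j, p.m (A k) := by
  have htail : (⋃ (k : ℕ) (_ : j ≤ k), A k) = ⋃ n, A (n + j) := by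
    ext x
    simp only [Set.mem_iUnion]
    exact ⟨fun ⟨k, hk, hx⟩ => ⟨k - j, by rwa [Nat.sub_add_cancel hk]⟩,
      fun ⟨n, hx⟩ => ⟨n + j, Nat.le_add_left j n, hx⟩⟩
  have hshift : HasSum (fun n => p.m (A (n + j))) (p.m (⋃ n, A (n + j))) :=
    p.cadd _ fun a b hab => hA (by omega)
  rw [htail, hshift.unique ((hasSum_nat_add_iff' j).2 (p.cadd A hA))]

end PosMeasure

theorem tendsto_m_singleton_of_disjoint_suppM {μseq : ℕ → PosMeasure ℕ}
    (hdisj : Pairwise fun i j => Disjoint (suppM (μseq i)) (suppM (μseq j))) (x : ℕ) :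
    Tendsto (fun i => (μseq i).m {x}) atTop (𝓝 0) := by
  by_cases h : ∃ i₀, x ∈ suppM (μseq i₀)
  · obtain ⟨i₀, hi₀⟩ := h
    refine tendsto_const_nhds.congr' ?_
    filter_upwards [eventually_gt_atTop i₀] with i hi
    refine (le_antisymm (not_lt.1 fun hpos => ?_) ((μseq i).nonneg _)).symm
    exact Set.disjoint_left.1 (hdisj hi.ne') hpos hi₀
  · push Not at h
    exact tendsto_const_nhds.congr fun i => (le_antisymm (not_lt.1 (h i)) ((μseq i).nonneg _)).symm

namespace NatTree

variable (T : NatTree) {t : ℕ}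

theorem singleton_subset_V (ht : t ∈ T.M) : {t} ⊆ V T t :=
  Set.singleton_subset_iff.2 (T.refl t ht)

theorem exists_mem_Succ_le {b : ℕ} (hb : T.r t b) (hne : b ≠ t) : ∃ s ∈ Succ T t, T.r s b := by
  have hbM : b ∈ T.M := T.mem_right hb
  let C : Set ℕ := {c | T.r t c ∧ T.r c b ∧ c ≠ t}
  have hCfin : C.Finite := (T.pred_finite b hbM).subset fun c hc => hc.2.1
  obtain ⟨s, hsC, hsmin⟩ := Set.exists_min_image C id hCfin ⟨b, hb, T.refl b hbM, hne⟩
  -- the chain below `b` is totally ordered, so the numerically least element of `C` is `≼`-least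
  have hleast : ∀ c ∈ C, T.r s c := fun c hc =>
    (T.pred_chain b hbM hsC.2.1 hc.2.1).elim id fun hcs => by
      obtain rfl : c = s := le_antisymm (T.compat hcs) (hsmin c hc)
      exact hcs
  refine ⟨s, ⟨hsC.1, hsC.2.2, fun c htc hcs => ?_⟩, hsC.2.1⟩
  by_cases hct : c = t
  · exact Or.inl hct
  · exact Or.inr (T.antisymm hcs (hleast c ⟨htc, T.trans hcs hsC.2.1, hct⟩))

theorem disjoint_V_of_mem_Succ {s₁ s₂ : ℕ} (h₁ : s₁ ∈ Succ T t) (h₂ : s₂ ∈ Succ T t)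
    (hne : s₁ ≠ s₂) : Disjoint (V T s₁) (V T s₂) := by
  refine Set.disjoint_left.2 fun b hb₁ hb₂ => ?_
  rcases T.pred_chain b (T.mem_right hb₁) hb₁ hb₂ with h | h
  · exact (h₂.2.2 s₁ h₁.1 h).elim h₁.2.1 hne
  · exact (h₁.2.2 s₂ h₂.1 h).elim h₂.2.1 (Ne.symm hne)

theorem V_diff_singleton_eq_biUnion_Succ : V T t \ {t} = ⋃ s ∈ Succ T t, V T s := by
  ext b
  simp only [Set.mem_sdiff, Set.mem_singleton_iff, Set.mem_iUnion, exists_prop]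
  constructor
  · rintro ⟨hb, hbt⟩
    obtain ⟨s, hs, hsb⟩ := T.exists_mem_Succ_le hb hbt
    exact ⟨s, hs, hsb⟩
  · rintro ⟨s, hs, hsb⟩
    refine ⟨T.trans hs.1 hsb, ?_⟩
    rintro rfl
    exact hs.2.1 (T.antisymm hsb hs.1)

theorem V_diff_singleton_eq_Succ_union :
    V T t \ {t} = Succ T t ∪ ⋃ s ∈ Succ T t, (V T s \ {s}) := by
  rw [V_diff_singleton_eq_biUnion_Succ]
  ext b
  simp only [Set.mem_iUnion, Set.mem_union, Set.mem_sdiff, Set.mem_singleton_iff, exists_prop]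
  constructor
  · rintro ⟨s, hs, hsb⟩
    by_cases hbs : b = s
    · exact Or.inl (hbs ▸ hs)
    · exact Or.inr ⟨s, hs, hsb, hbs⟩
  · rintro (hb | ⟨s, hs, hsb, -⟩)
    · exact ⟨b, hb, T.singleton_subset_V (T.mem_right hb.1) rfl⟩
    · exact ⟨s, hs, hsb⟩

theorem disjoint_Succ_biUnion_V_diff_singleton :
    Disjoint (Succ T t) (⋃ s ∈ Succ T t, (V T s \ {s})) := by
  simp only [Set.disjoint_iUnion_right]
  refine fun s hs => Set.disjoint_left.2 fun x hx hxs => ?_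
  exact (hx.2.2 s hs.1 hxs.1).elim hs.2.1 (Ne.symm hxs.2)

section Enumeration

variable {T} {e : ℕ → ℕ}

theorem pairwise_disjoint_V_comp (he : Set.range e = Succ T t) (he_inj : Function.Injective e) :
    Pairwise fun k l => Disjoint (V T (e k)) (V T (e l)) := fun k l hkl =>
  T.disjoint_V_of_mem_Succ (he ▸ Set.mem_range_self k) (he ▸ Set.mem_range_self l)
    (he_inj.ne hkl)

theorem hasSum_m_V_comp (he : Set.range e = Succ T t) (he_inj : Function.Injective e)
    (ht : t ∈ T.M) (p : PosMeasure ℕ) :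
    HasSum (fun k => p.m (V T (e k))) (p.m (V T t) - p.m {t}) := by
  rw [← p.m_diff (T.singleton_subset_V ht), V_diff_singleton_eq_biUnion_Succ,
    ← he, Set.biUnion_range]
  exact p.cadd _ (pairwise_disjoint_V_comp he he_inj)

theorem m_iUnion_ge_V_diff_singleton (he : Set.range e = Succ T t)
    (he_inj : Function.Injective e) (ht : t ∈ T.M) (p : PosMeasure ℕ) (j : ℕ) :
    p.m (⋃ (k : ℕ) (_ : j ≤ k), (V T (e k) \ {e k})) =
      p.m (V T t) - p.m {t} - p.m (Succ T t) -
        ∑ k ∈ Finset.range j, (p.m (V T (e k)) - p.m {e k}) := by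
  have hdisj : Pairwise fun k l => Disjoint (V T (e k) \ {e k}) (V T (e l) \ {e l}) :=
    fun k l hkl => (pairwise_disjoint_V_comp he he_inj hkl).mono Set.sdiff_subset Set.sdiff_subset
  have hunion : p.m (V T t) - p.m {t} = p.m (Succ T t) + p.m (⋃ k, (V T (e k) \ {e k})) := by
    rw [← p.m_diff (T.singleton_subset_V ht),
      V_diff_singleton_eq_Succ_union, p.m_union (disjoint_Succ_biUnion_V_diff_singleton T),
      ← he, Set.biUnion_range]
  rw [p.m_iUnion_ge hdisj]
  refine congr_arg₂ _ (by linarith) (Finset.sum_congr rfl fun k _ => p.m_diff ?_)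
  exact T.singleton_subset_V (T.mem_right (he ▸ Set.mem_range_self k : e k ∈ Succ T t).1)

end Enumeration

end NatTree

theorem stmt_10_general (T : NatTree) (μseq : ℕ → PosMeasure ℕ) (μ : PosMeasure ℕ) (ν : ℕ → ℝ)
    (hdisj : ∀ i j : ℕ, i ≠ j → Disjoint (suppM (μseq i)) (suppM (μseq j)))
    (hw : ∀ t ∈ T.M,
      Filter.Tendsto (fun i => (μseq i).m (V T t)) Filter.atTop (nhds (μ.m (V T t))))
    (hν : ∀ t ∈ T.M,
      Filter.Tendsto (fun i => (μseq i).m (Succ T t)) Filter.atTop (nhds (ν t)))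
    (t : ℕ) (ht : t ∈ T.M)
    (e : ℕ → ℕ) (he1 : ∀ k, e k ∈ Succ T t) (he2 : Function.Injective e)
    (he3 : ∀ s ∈ Succ T t, ∃ k, e k = s) :
    ∃ (L : ℕ → ℝ) (c : ℝ),
      (∀ j : ℕ, Filter.Tendsto
        (fun i => (μseq i).m (⋃ (k : ℕ) (_ : j ≤ k), (V T (e k) \ {e k})))
        Filter.atTop (nhds (L j))) ∧
      Filter.Tendsto L Filter.atTop (nhds c) ∧
      μ.m {t} = ν t + c ∧
      (μ.m {t} = ν t ↔ c = 0) := by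
  have he : Set.range e = Succ T t :=
    (Set.range_subset_iff.2 he1).antisymm fun s hs => he3 s hs
  have hatom := tendsto_m_singleton_of_disjoint_suppM hdisj
  refine ⟨fun j => μ.m (V T t) - ν t - ∑ k ∈ Finset.range j, μ.m (V T (e k)), μ.m {t} - ν t,
    fun j => ?_, ?_, by ring, sub_eq_zero.symm⟩
  · simp_rw [NatTree.m_iUnion_ge_V_diff_singleton he he2 ht]
    simpa using (((hw t ht).sub (hatom t)).sub (hν t ht)).sub <|
      tendsto_finsetSum _ fun k _ => (hw (e k) (T.mem_right (he1 k).1)).sub (hatom (e k))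
  · convert (NatTree.hasSum_m_V_comp he he2 ht μ).tendsto_sum_nat.const_sub
      (μ.m (V T t) - ν t) using 2
    ring

/-- if `(μ_i)` is bounded and disjointly supported, `μ = w*-lim μ_i` exists
and `ν({t}) = lim_i μ_i(S(t))` exists for every node `t`, then for every non-maximal node
`t` and every enumeration `(t_j)_j` of `S(t)` the iterated limit
`lim_j lim_i μ_i(⋃_{k ≥ j} (V_{t_k} \ {t_k}))` exists and
`μ({t}) = ν({t}) + lim_j lim_i μ_i(⋃_{k ≥ j}(V_{t_k} \ {t_k}))`; in particular
`μ({t}) = ν({t})` iff this double limit is zero. -/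
theorem stmt_10 (T : NatTree) (μseq : ℕ → PosMeasure ℕ) (μ : PosMeasure ℕ) (ν : ℕ → ℝ)
    (hsupp : ∀ i, suppM (μseq i) ⊆ T.M)
    (hdisj : ∀ i j : ℕ, i ≠ j → Disjoint (suppM (μseq i)) (suppM (μseq j)))
    (hbdd : ∃ B : ℝ, ∀ i, (μseq i).m Set.univ ≤ B)
    (hw : ∀ t ∈ T.M,
      Filter.Tendsto (fun i => (μseq i).m (V T t)) Filter.atTop (nhds (μ.m (V T t))))
    (hν : ∀ t ∈ T.M,
      Filter.Tendsto (fun i => (μseq i).m (Succ T t)) Filter.atTop (nhds (ν t)))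
    (t : ℕ) (ht : t ∈ T.M) (htnm : ∃ s, s ≠ t ∧ T.r t s)
    (e : ℕ → ℕ) (he1 : ∀ k, e k ∈ Succ T t) (he2 : Function.Injective e)
    (he3 : ∀ s ∈ Succ T t, ∃ k, e k = s) :
    ∃ (L : ℕ → ℝ) (c : ℝ),
      (∀ j : ℕ, Filter.Tendsto
        (fun i => (μseq i).m (⋃ (k : ℕ) (_ : j ≤ k), (V T (e k) \ {e k})))
        Filter.atTop (nhds (L j))) ∧
      Filter.Tendsto L Filter.atTop (nhds c) ∧
      μ.m {t} = ν t + c ∧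
      (μ.m {t} = ν t ↔ c = 0) :=
  stmt_10_general T μseq μ ν hdisj hw hν t ht e he1 he2 he3
end

section
/- Let T be a countably branching well-founded tree with associated tree of initial segments T̃, and let (μ_i)_{i∈ℕ} be a bounded and disjointly supported sequence in M_+(T̃). Then there exist a subsequence (μ_{i_n})_n of (μ_i)_i and a measure ν ∈ M_+(T̃) such that ν = succ-lim_n μ_{i_n}, i.e., ν({t̃}) = lim_n μ_{i_n}(S(t̃)) for every t̃ ∈ T̃. -/
/-! The masses `μ_i(S(t))` all lie in `[0, B]`, so by Tychonoff (a countable product of compact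
intervals is sequentially compact) some subsequence converges at every node `t` at once, to `a t`
say. The sets `S(t)` are pairwise disjoint, so every finite sum `∑_{t ∈ F} μ_i(S(t))` is at most
`B`, hence so is `∑_{t ∈ F} a t`. Thus `a` is summable and `ν = ∑_t a t • δ_t` is a bounded
measure with the required atoms; it vanishes off `M` because `S(t) = ∅` there. -/

open Set Filter Topology MeasureTheory Function

namespace PosMeasure

variable {α : Type*} (ν : PosMeasure α)

theorem sum_le_m_iUnion {A : ℕ → Set α} (hA : Pairwise (Disjoint on A)) (s : Finset ℕ) :
    ∑ i ∈ s, ν.m (A i) ≤ ν.m (⋃ i, A i) :=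
  sum_le_hasSum s (fun _ _ => ν.nonneg _) (ν.cadd A hA)

theorem m_mono {X Y : Set α} (h : X ⊆ Y) : ν.m X ≤ ν.m Y := by
  classical
  -- disjointing `X, Y, Y, …` gives `X, Y \ X, ∅, …`
  set A : ℕ → Set α := fun n => if n = 0 then X else Y
  have hA : ⋃ n, A n = Y :=
    (iUnion_subset fun n => by by_cases hn : n = 0 <;> simp [A, hn, h]).antisymm
      (subset_iUnion A 1)
  calc ν.m X = ∑ i ∈ {0}, ν.m (disjointed A i) := by simp [A]
    _ ≤ ν.m (⋃ i, disjointed A i) := ν.sum_le_m_iUnion (disjoint_disjointed A) _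
    _ = ν.m Y := by rw [iUnion_disjointed, hA]

theorem sum_le_m_univ {A : ℕ → Set α} (hA : Pairwise (Disjoint on A)) (s : Finset ℕ) :
    ∑ i ∈ s, ν.m (A i) ≤ ν.m univ :=
  (ν.sum_le_m_iUnion hA s).trans (ν.m_mono (subset_univ _))

variable [MeasurableSpace α] [DiscreteMeasurableSpace α]

noncomputable def ofMeasure (κ : Measure α) [IsFiniteMeasure κ] : PosMeasure α where
  m A := κ.real A
  nonneg _ := measureReal_nonneg
  empty := measureReal_empty
  cadd A hA := by
    have h := measure_iUnion (μ := κ) hA fun _ => MeasurableSet.of_discrete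
    simp only [measureReal_def, h, ENNReal.tsum_toReal_eq fun _ => measure_ne_top κ _]
    exact ENNReal.hasSum_toReal (h ▸ measure_ne_top κ _)

noncomputable def ofAtoms (a : α → ℝ) (ha : 0 ≤ a) (hs : Summable a) : PosMeasure α :=
  haveI : IsFiniteMeasure (Measure.count.withDensity fun t => ENNReal.ofReal (a t)) := by
    refine ⟨?_⟩
    rw [withDensity_apply _ MeasurableSet.univ, Measure.restrict_univ, lintegral_count,
      ← ENNReal.ofReal_tsum_of_nonneg ha hs]
    exact ENNReal.ofReal_lt_top
  ofMeasure (Measure.count.withDensity fun t => ENNReal.ofReal (a t))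

@[simp]
theorem ofAtoms_m_singleton (a : α → ℝ) (ha : 0 ≤ a) (hs : Summable a) (t : α) :
    (ofAtoms a ha hs).m {t} = a t := by
  simp [ofAtoms, ofMeasure, measureReal_def, withDensity_apply _ (measurableSet_singleton t),
    ENNReal.toReal_ofReal (ha t)]

end PosMeasure

theorem exists_strictMono_tendsto_of_mem_Icc {ι : Type*} [Countable ι] {x : ℕ → ι → ℝ}
    {c d : ℝ} (hx : ∀ n t, x n t ∈ Icc c d) :
    ∃ a : ι → ℝ, (∀ t, a t ∈ Icc c d) ∧ ∃ φ : ℕ → ℕ, StrictMono φ ∧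
      ∀ t, Tendsto (fun n => x (φ n) t) atTop (𝓝 (a t)) := by
  obtain ⟨a, ha, φ, hφ, hlim⟩ :=
    (isCompact_univ_pi fun _ : ι => isCompact_Icc (a := c) (b := d)).tendsto_subseq
      (x := x) fun n t _ => hx n t
  exact ⟨a, fun t => ha t trivial, φ, hφ, tendsto_pi_nhds.mp hlim⟩

theorem summable_of_tendsto_of_sum_le {ι : Type*} {x : ℕ → ι → ℝ} {a : ι → ℝ} {B : ℝ}
    (ha : 0 ≤ a) (hlim : ∀ t, Tendsto (fun n => x n t) atTop (𝓝 (a t)))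
    (hB : ∀ n (s : Finset ι), ∑ t ∈ s, x n t ≤ B) : Summable a :=
  summable_of_sum_le ha fun s =>
    le_of_tendsto' (tendsto_finsetSum s fun t _ => hlim t) fun n => hB n s

namespace NatTree

variable (T : NatTree)

theorem pairwise_disjoint_succ : Pairwise (Disjoint on Succ T) := by
  intro s t hst
  rw [onFun, Set.disjoint_left]
  rintro u ⟨hsu, hus, hmins⟩ ⟨htu, hut, hmint⟩
  rcases T.pred_chain u (T.mem_right hsu) hsu htu with h | h
  · rcases hmins t h htu with rfl | rfl
    exacts [hst rfl, hut rfl]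
  · rcases hmint s h hsu with rfl | rfl
    exacts [hst rfl, hus rfl]

theorem succ_eq_empty {t : ℕ} (ht : t ∉ T.M) : Succ T t = ∅ :=
  eq_empty_of_forall_notMem fun _ hs => ht (T.mem_left hs.1)

end NatTree

theorem stmt_11_general (T : NatTree) (μ : ℕ → PosMeasure ℕ)
    (hbdd : ∃ B : ℝ, ∀ i, (μ i).m Set.univ ≤ B) :
    ∃ φ : ℕ → ℕ, StrictMono φ ∧ ∃ ν : PosMeasure ℕ, suppM ν ⊆ T.M ∧
      ∀ t ∈ T.M, Filter.Tendsto (fun n => (μ (φ n)).m (Succ T t))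
        Filter.atTop (nhds (ν.m {t})) := by
  obtain ⟨B, hB⟩ := hbdd
  obtain ⟨a, ha, φ, hφ, hlim⟩ := exists_strictMono_tendsto_of_mem_Icc
    (x := fun i t => (μ i).m (Succ T t))
    fun i t => ⟨(μ i).nonneg _, ((μ i).m_mono (subset_univ _)).trans (hB i)⟩
  have ha0 : 0 ≤ a := fun t => (ha t).1
  have hsum : Summable a := summable_of_tendsto_of_sum_le ha0 hlim
    fun n s => ((μ (φ n)).sum_le_m_univ T.pairwise_disjoint_succ s).trans (hB _)
  refine ⟨φ, hφ, PosMeasure.ofAtoms a ha0 hsum, fun t ht => ?_,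
    fun t _ => by simpa using hlim t⟩
  by_contra htM
  have hat : a t = 0 :=
    tendsto_nhds_unique (hlim t) (by simp [T.succ_eq_empty htM, PosMeasure.empty])
  simp [suppM, hat] at ht

/-- every bounded and disjointly supported sequence `(μ_i)` of positive
measures on the tree admits a subsequence `(μ_{i_n})` and a measure `ν` with
`ν = succ-lim_n μ_{i_n}`, i.e. `ν({t}) = lim_n μ_{i_n}(S(t))` for every node `t`. -/
theorem stmt_11 (T : NatTree) (μ : ℕ → PosMeasure ℕ)
    (hsupp : ∀ i, suppM (μ i) ⊆ T.M)
    (hdisj : ∀ i j : ℕ, i ≠ j → Disjoint (suppM (μ i)) (suppM (μ j)))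
    (hbdd : ∃ B : ℝ, ∀ i, (μ i).m Set.univ ≤ B) :
    ∃ φ : ℕ → ℕ, StrictMono φ ∧ ∃ ν : PosMeasure ℕ, suppM ν ⊆ T.M ∧
      ∀ t ∈ T.M, Filter.Tendsto (fun n => (μ (φ n)).m (Succ T t))
        Filter.atTop (nhds (ν.m {t})) :=
  stmt_11_general T μ hbdd
end

section
/- Let T be a countably branching well-founded tree with associated tree of initial segments T̃. Let (μ_i) be a bounded and disjointly supported sequence in M_+(T̃) such that ν = succ-lim_i μ_i exists. Then there exist an infinite subset L of ℕ and, for each i ∈ L, a partition supp(μ_i) = A_i ∪ B_i (A_i, B_i disjoint) such that: (i) the measures μ_i^1 given by μ_i^1(C) = μ_i(C ∩ A_i) satisfy ν = w*-lim_{i∈L} μ_i^1 and ν = succ-lim_{i∈L} μ_i^1; and (ii) the measures μ_i^2 given by μ_i^2(C) = μ_i(C ∩ B_i) satisfy: for every t̃ ∈ T̃ the sequence (μ_i^2(S(t̃)))_{i∈L} is eventually zero; in particular succ-lim_{i∈L} μ_i^2 = 0. -/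
/-!
Pass to a subsequence along which `μ_{φ n}(S(k)) ≤ ν{k} + 2⁻ᵏ` for every `k ≤ n`, and put into
`A_n` the part of the support of `μ_{φ n}` lying in `S(0) ∪ ⋯ ∪ S(n)`. Then `μ_{φ n}^1(S(t))`
and `μ_{φ n}(S(t))` agree as soon as `n ≥ t`, and `B_n` misses `S(t)` from then on. For the
weak* limit, once `t` has left the support of `μ_{φ n}` (which happens by disjointness), the mass
`μ_{φ n}^1(V_t)` is the sum over the successor sets `S(k) ⊆ V_t` with `k ≤ n`; each term tends to
`ν{k}` and is dominated by the summable `ν{k} + 2⁻ᵏ`, so dominated convergence gives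
`∑_{k ∈ V_t} ν{k} = ν(V_t)`.
-/

open Filter Topology Function
open scoped Classical

namespace PosMeasure

variable {α : Type*} (μ : PosMeasure α)

lemma hasSum_inter {D : ℕ → Set α} (hD : Pairwise (Disjoint on D)) (C : Set α) :
    HasSum (fun k => μ.m (C ∩ D k)) (μ.m (C ∩ ⋃ k, D k)) := by
  rw [Set.inter_iUnion]
  exact μ.cadd _ fun i j hij => (hD hij).mono Set.inter_subset_right Set.inter_subset_right

lemma m_inter_singleton (C : Set α) (a : α) :
    μ.m (C ∩ {a}) = if a ∈ C then μ.m {a} else 0 := by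
  split_ifs with ha
  · rw [Set.inter_eq_right.2 (Set.singleton_subset_iff.2 ha)]
  · rw [Set.inter_singleton_eq_empty.2 ha, μ.empty]

lemma hasSum_inter_singleton (μ : PosMeasure ℕ) (C : Set ℕ) :
    HasSum (fun k => μ.m (C ∩ {k})) (μ.m C) := by
  simpa [Set.iUnion_of_singleton] using
    μ.hasSum_inter (D := fun k => {k}) (fun _ _ h => Set.disjoint_singleton.2 h) C

lemma m_singleton_eq_zero {μ : PosMeasure ℕ} {a : ℕ} (ha : a ∉ suppM μ) : μ.m {a} = 0 :=
  le_antisymm (not_lt.1 ha) (μ.nonneg _)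

lemma m_inter_suppM (μ : PosMeasure ℕ) (C : Set ℕ) : μ.m (C ∩ suppM μ) = μ.m C := by
  refine (μ.hasSum_inter_singleton _).unique ?_
  convert μ.hasSum_inter_singleton C using 2 with k
  rw [m_inter_singleton, m_inter_singleton]
  by_cases hk : k ∈ suppM μ
  · simp only [Set.mem_inter_iff, hk, and_true]
  · simp only [m_singleton_eq_zero hk, ite_self]

end PosMeasure

lemma eventually_notMem_of_pairwise_disjoint {α : Type*} {s : ℕ → Set α}
    (hs : Pairwise (Disjoint on s)) (a : α) : ∀ᶠ i in atTop, a ∉ s i := by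
  have hsub : {i | a ∈ s i}.Subsingleton := fun i hi j hj =>
    by_contra fun hij => Set.disjoint_left.1 (hs hij) hi hj
  rw [← Nat.cofinite_eq_atTop]
  exact hsub.finite.eventually_cofinite_notMem

lemma exists_strictMono_forall_le_of_eventually {P : ℕ → ℕ → Prop}
    (h : ∀ k, ∀ᶠ i in atTop, P k i) : ∃ φ : ℕ → ℕ, StrictMono φ ∧ ∀ n, ∀ k ≤ n, P k (φ n) :=
  extraction_forall_of_eventually fun n =>
    (eventually_all_finite (Set.finite_Iic n)).2 fun k _ => h k

section Tree

variable (T : NatTree)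

lemma pairwise_disjoint_succ : Pairwise (Disjoint on Succ T) := by
  intro i j hij
  rw [Function.onFun, Set.disjoint_left]
  rintro s ⟨his, hsi, hi⟩ ⟨hjs, hsj, hj⟩
  rcases T.pred_chain s (T.mem_right his) his hjs with hij' | hji'
  · rcases hi j hij' hjs with h | h
    · exact hij h.symm
    · exact hsj h.symm
  · rcases hj i hji' his with h | h
    · exact hij h
    · exact hsi h.symm

lemma succ_subset_V {t k : ℕ} (h : T.r t k) : Succ T k ⊆ V T t :=
  fun _ hs => T.trans h hs.1

lemma V_inter_succ_subset {t k : ℕ} (ht : t ∈ T.M) (h : ¬ T.r t k) :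
    V T t ∩ Succ T k ⊆ {t} := by
  rintro s ⟨hts, hks, -, hk⟩
  rcases T.pred_chain s (T.mem_right hts) hts hks with htk | hkt
  · exact absurd htk h
  · rcases hk t hkt hts with rfl | rfl
    · exact absurd (T.refl _ ht) h
    · rfl

def succUpTo (n : ℕ) : Set ℕ := ⋃ k ≤ n, Succ T k

lemma succ_subset_succUpTo {k n : ℕ} (h : k ≤ n) : Succ T k ⊆ succUpTo T n :=
  Set.subset_iUnion₂ (s := fun k (_ : k ≤ n) => Succ T k) k h

lemma disjoint_succ_succUpTo {k n : ℕ} (h : n < k) : Disjoint (Succ T k) (succUpTo T n) :=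
  Set.disjoint_iUnion₂_right.2 fun _ hj => pairwise_disjoint_succ T (by omega)

lemma succUpTo_subset_iUnion_succ (n : ℕ) : succUpTo T n ⊆ ⋃ k, Succ T k :=
  Set.iUnion₂_subset fun k _ => Set.subset_iUnion (Succ T) k

lemma m_V_inter_succUpTo_inter_succ (ρ : PosMeasure ℕ) {t : ℕ} (ht : t ∈ T.M)
    (hρt : t ∉ suppM ρ) (n k : ℕ) :
    ρ.m (V T t ∩ (suppM ρ ∩ succUpTo T n) ∩ Succ T k) =
      if k ≤ n ∧ T.r t k then ρ.m (Succ T k) else 0 := by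
  split_ifs with h
  · obtain ⟨hkn, htk⟩ := h
    rw [← ρ.m_inter_suppM (Succ T k)]
    congr 1
    ext x
    constructor
    · rintro ⟨⟨-, hxs, -⟩, hxk⟩
      exact ⟨hxk, hxs⟩
    · rintro ⟨hxk, hxs⟩
      exact ⟨⟨succ_subset_V T htk hxk, hxs, succ_subset_succUpTo T hkn hxk⟩, hxk⟩
  · convert ρ.empty
    refine Set.eq_empty_of_forall_notMem ?_
    rintro x ⟨⟨hxV, hxs, hxU⟩, hxk⟩
    by_cases htk : T.r t k
    · have hnk : n < k := lt_of_not_ge fun hkn => h ⟨hkn, htk⟩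
      exact Set.disjoint_left.1 (disjoint_succ_succUpTo T hnk) hxk hxU
    · obtain rfl : x = t := V_inter_succ_subset T ht htk ⟨hxV, hxk⟩
      exact hρt hxs

theorem tendsto_m_V_inter_succUpTo (μ : ℕ → PosMeasure ℕ) (ν : PosMeasure ℕ) {φ : ℕ → ℕ}
    (hφ : StrictMono φ) (hdisj : Pairwise (Disjoint on fun i => suppM (μ i)))
    (hν : ∀ t ∈ T.M, Tendsto (fun i => (μ i).m (Succ T t)) atTop (𝓝 (ν.m {t})))
    (hφν : ∀ n, ∀ k ≤ n, k ∈ T.M → (μ (φ n)).m (Succ T k) ≤ ν.m {k} + (1 / 2) ^ k)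
    {t : ℕ} (ht : t ∈ T.M) :
    Tendsto (fun n => (μ (φ n)).m (V T t ∩ (suppM (μ (φ n)) ∩ succUpTo T n))) atTop
      (𝓝 (ν.m (V T t))) := by
  set g : ℕ → ℕ → ℝ := fun n k => if k ≤ n ∧ T.r t k then (μ (φ n)).m (Succ T k) else 0
  have hlim : ∀ k, Tendsto (g · k) atTop (𝓝 (ν.m (V T t ∩ {k}))) := by
    intro k
    rw [ν.m_inter_singleton]
    by_cases htk : T.r t k
    · rw [if_pos (show k ∈ V T t from htk)]
      refine ((hν k (T.mem_right htk)).comp hφ.tendsto_atTop).congr' ?_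
      filter_upwards [eventually_ge_atTop k] with n hn
      simp [g, hn, htk]
    · simp [g, htk, V]
  have hbound : ∀ n k, ‖g n k‖ ≤ ν.m {k} + (1 / 2) ^ k := by
    intro n k
    simp only [g]
    split_ifs with h
    · rw [Real.norm_of_nonneg ((μ (φ n)).nonneg _)]
      exact hφν n k h.1 (T.mem_right h.2)
    · simp only [norm_zero]
      exact add_nonneg (ν.nonneg _) (by positivity)
  have hsum : Summable fun k => ν.m {k} + (1 / 2 : ℝ) ^ k := by
    have hν_atoms : Summable fun k => ν.m {k} := by
      simpa using (ν.hasSum_inter_singleton Set.univ).summable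
    exact hν_atoms.add summable_geometric_two
  have hdom := tendsto_tsum_of_dominated_convergence hsum hlim (Eventually.of_forall hbound)
  rw [(ν.hasSum_inter_singleton _).tsum_eq] at hdom
  refine hdom.congr' ?_
  filter_upwards [hφ.tendsto_atTop.eventually (eventually_notMem_of_pairwise_disjoint hdisj t)]
    with n hn
  have hsplit := (μ (φ n)).hasSum_inter (pairwise_disjoint_succ T)
    (V T t ∩ (suppM (μ (φ n)) ∩ succUpTo T n))
  rw [Set.inter_eq_left.2 (Set.inter_subset_right.trans
    (Set.inter_subset_right.trans (succUpTo_subset_iUnion_succ T n)))] at hsplit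
  rw [← hsplit.tsum_eq]
  exact tsum_congr fun k => (m_V_inter_succUpTo_inter_succ T _ ht hn n k).symm

end Tree

theorem stmt_12_general (T : NatTree) (μ : ℕ → PosMeasure ℕ) (ν : PosMeasure ℕ)
    (hdisj : ∀ i j : ℕ, i ≠ j → Disjoint (suppM (μ i)) (suppM (μ j)))
    (hν : ∀ t ∈ T.M, Filter.Tendsto (fun i => (μ i).m (Succ T t))
      Filter.atTop (nhds (ν.m {t}))) :
    ∃ φ : ℕ → ℕ, StrictMono φ ∧ ∃ A B : ℕ → Set ℕ,
      (∀ n : ℕ, A n ∪ B n = suppM (μ (φ n)) ∧ Disjoint (A n) (B n)) ∧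
      (∀ t ∈ T.M,
        Filter.Tendsto (fun n => (μ (φ n)).m (V T t ∩ A n)) Filter.atTop
          (nhds (ν.m (V T t))) ∧
        Filter.Tendsto (fun n => (μ (φ n)).m (Succ T t ∩ A n)) Filter.atTop
          (nhds (ν.m {t}))) ∧
      (∀ t ∈ T.M,
        (∀ᶠ n in Filter.atTop, (μ (φ n)).m (Succ T t ∩ B n) = 0) ∧
        Filter.Tendsto (fun n => (μ (φ n)).m (Succ T t ∩ B n)) Filter.atTop (nhds 0)) := by
  obtain ⟨φ, hφ, hφν⟩ := exists_strictMono_forall_le_of_eventually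
    (P := fun k i => k ∈ T.M → (μ i).m (Succ T k) ≤ ν.m {k} + (1 / 2) ^ k) fun k => by
      by_cases hk : k ∈ T.M
      · exact ((hν k hk).eventually_lt_const (lt_add_of_pos_right _ (by positivity))).mono
          fun _ hi _ => hi.le
      · exact Eventually.of_forall fun _ hk' => absurd hk' hk
  refine ⟨φ, hφ, fun n => suppM (μ (φ n)) ∩ succUpTo T n,
    fun n => suppM (μ (φ n)) \ succUpTo T n,
    fun n => ⟨Set.inter_union_sdiff _ _, Set.disjoint_sdiff_inter.symm⟩,
    fun t ht => ⟨tendsto_m_V_inter_succUpTo T μ ν hφ hdisj hν hφν ht, ?_⟩, fun t ht => ?_⟩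
  · refine ((hν t ht).comp hφ.tendsto_atTop).congr' ?_
    filter_upwards [eventually_ge_atTop t] with n hn
    rw [Set.inter_comm (suppM _), ← Set.inter_assoc,
      Set.inter_eq_left.2 (succ_subset_succUpTo T hn), PosMeasure.m_inter_suppM]
    rfl
  · have hB : ∀ᶠ n in atTop, (μ (φ n)).m (Succ T t ∩ (suppM (μ (φ n)) \ succUpTo T n)) = 0 := by
      filter_upwards [eventually_ge_atTop t] with n hn
      rw [Set.disjoint_iff_inter_eq_empty.1
        (Set.disjoint_sdiff_right.mono_left (succ_subset_succUpTo T hn)), PosMeasure.empty]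
    exact ⟨hB, tendsto_const_nhds.congr' (hB.mono fun _ h => h.symm)⟩

/-- splitting lemma: if `(μ_i)` is bounded and disjointly supported and
`ν = succ-lim_i μ_i` exists, then along an infinite subset (enumerated by `φ`) the supports
split as `supp μ_i = A_i ∪ B_i` so that the restrictions `μ_i^1 = μ_i(· ∩ A_i)` satisfy
`ν = w*-lim μ_i^1 = succ-lim μ_i^1`, while the restrictions `μ_i^2 = μ_i(· ∩ B_i)` satisfy
`(μ_i^2(S(t)))_i` eventually zero for every `t`; in particular `succ-lim μ_i^2 = 0`. -/
theorem stmt_12 (T : NatTree) (μ : ℕ → PosMeasure ℕ) (ν : PosMeasure ℕ)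
    (hsupp : ∀ i, suppM (μ i) ⊆ T.M)
    (hdisj : ∀ i j : ℕ, i ≠ j → Disjoint (suppM (μ i)) (suppM (μ j)))
    (hbdd : ∃ B : ℝ, ∀ i, (μ i).m Set.univ ≤ B)
    (hν : ∀ t ∈ T.M, Filter.Tendsto (fun i => (μ i).m (Succ T t))
      Filter.atTop (nhds (ν.m {t}))) :
    ∃ φ : ℕ → ℕ, StrictMono φ ∧ ∃ A B : ℕ → Set ℕ,
      (∀ n : ℕ, A n ∪ B n = suppM (μ (φ n)) ∧ Disjoint (A n) (B n)) ∧
      (∀ t ∈ T.M,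
        Filter.Tendsto (fun n => (μ (φ n)).m (V T t ∩ A n)) Filter.atTop
          (nhds (ν.m (V T t))) ∧
        Filter.Tendsto (fun n => (μ (φ n)).m (Succ T t ∩ A n)) Filter.atTop
          (nhds (ν.m {t}))) ∧
      (∀ t ∈ T.M,
        (∀ᶠ n in Filter.atTop, (μ (φ n)).m (Succ T t ∩ B n) = 0) ∧
        Filter.Tendsto (fun n => (μ (φ n)).m (Succ T t ∩ B n)) Filter.atTop (nhds 0)) :=
  stmt_12_general T μ ν hdisj hν
end
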